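/- arXiv:1904.08656 — 8 statements merged into one kernel-verified Lean document; each statement's English description precedes it below -/
import Mathlib

section
/- The chromatic number of the Kneser graph Γ of plane-solid flags of PG(6,q) is at most q^4 + q^3 + q^2 + 1. -/
variable {F V : Type*} [Field F] [AddCommGroup V] [Module F V]

/-- A plane-solid flag of PG(6,q): a pair (E,S) with E a plane (3-dim subspace),
S a solid (4-dim subspace) and E ⊆ S. -/
def IsFlag (f : Submodule F V × Submodule F V) : Prop :=
  Module.finrank F f.1 = 3 ∧ Module.finrank F f.2 = 4 ∧ f.1 ≤ f.2

/-- Two flags are in general position if E ∩ S' = 0 and E' ∩ S = 0. -/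
def GenPos (f g : Submodule F V × Submodule F V) : Prop :=
  f.1 ⊓ g.2 = ⊥ ∧ g.1 ⊓ f.2 = ⊥

/-- An independent set of plane-solid flags: a set of flags no two distinct members
of which are in general position. -/
def IsIndep (C : Set (Submodule F V × Submodule F V)) : Prop :=
  (∀ f ∈ C, IsFlag f) ∧ ∀ f ∈ C, ∀ g ∈ C, f ≠ g → ¬ GenPos f g

/-- A maximal independent set of plane-solid flags. -/
def IsMaxIndep (C : Set (Submodule F V × Submodule F V)) : Prop :=
  IsIndep C ∧ ∀ D : Set (Submodule F V × Submodule F V), IsIndep D → C ⊆ D → C = D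

/-- The Kneser graph Γ of plane-solid flags: vertices are the flags, two distinct
flags being adjacent exactly when they are in general position. -/
def Gamma (F V : Type*) [Field F] [AddCommGroup V] [Module F V] :
    SimpleGraph {f : Submodule F V × Submodule F V // IsFlag f} where
  Adj f g := f ≠ g ∧ GenPos f.1 g.1
  symm := by
    constructor
    intro f g h
    refine ⟨h.1.symm, h.2.2, h.2.1⟩
  loopless := by
    constructor
    intro f h
    exact h.1 rfl

/-!
Fix a point `X = ⟨e₀⟩` on a line `L = ⟨e₀, e₁⟩` inside the 4-space `Y = ⟨e₀, …, e₄⟩`. For a point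
`p` on a line `ℓ`, the flags `(E, S)` with `p ∈ E` or `ℓ ⊆ S` are pairwise not in general
position: if `p` lies in one of the planes it lies in the other solid, and if `ℓ ⊆ S ∩ S'` then
`E ∩ ℓ ≠ 0` since `dim E + dim ℓ > dim S`. The colour classes are such stars: that of `(X, L)`,
and for each of the `q²(q² + q + 1)` points `p = ⟨a e₀ + b e₁ + u⟩` of `Y ∖ L` (with `u` a fixed
representative of a point of `PG(2, q)`) that of `(p, ⟨p, b e₀ + e₁⟩)`.

Every flag lies in one of them. The plane `E` meets `Y`; if it meets it outside `L` we are done.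
Otherwise either `X ⊆ E`, or `E` contains a point `z = ⟨δ e₀ + e₁⟩` of `L ∖ X`. Then either `L ⊆ S`,
or `S` contains a point `v` of `Y ∖ L`, and the line `⟨v, z⟩ ⊆ S` has exactly one point `p` with
`b = δ`, for which `⟨p, b e₀ + e₁⟩ = ⟨v, z⟩`.
-/

open Module Submodule
open scoped LinearAlgebra.Projectivization

theorem finrank_add_finrank_le_finrank_add_finrank_inf {A B S : Submodule F V}
    [FiniteDimensional F S] (hA : A ≤ S) (hB : B ≤ S) :
    finrank F A + finrank F B ≤ finrank F S + finrank F ↥(A ⊓ B) := by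
  have : FiniteDimensional F A := Submodule.finiteDimensional_of_le hA
  have : FiniteDimensional F B := Submodule.finiteDimensional_of_le hB
  rw [← Submodule.finrank_sup_add_finrank_inf_eq]
  exact Nat.add_le_add_right (Submodule.finrank_mono (sup_le hA hB)) _

theorem inf_ne_bot_of_finrank_lt {A B S : Submodule F V} [FiniteDimensional F S]
    (hA : A ≤ S) (hB : B ≤ S) (h : finrank F S < finrank F A + finrank F B) : A ⊓ B ≠ ⊥ := by
  intro hAB
  have := finrank_add_finrank_le_finrank_add_finrank_inf hA hB
  rw [hAB, finrank_bot] at this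
  omega

theorem IsFlag.map {V' : Type*} [AddCommGroup V'] [Module F V']
    {f : Submodule F V × Submodule F V} (hf : IsFlag f) (e : V ≃ₗ[F] V') :
    IsFlag (f.1.map (e : V →ₗ[F] V'), f.2.map (e : V →ₗ[F] V')) :=
  ⟨(LinearEquiv.finrank_map_eq e _).trans hf.1, (LinearEquiv.finrank_map_eq e _).trans hf.2.1,
    Submodule.map_mono hf.2.2⟩

def InStar (p : V) (ℓ : Submodule F V) (f : Submodule F V × Submodule F V) : Prop :=
  p ∈ f.1 ∨ ℓ ≤ f.2

theorem not_genPos_of_inStar {p : V} {ℓ : Submodule F V} (hp : p ≠ 0) (hpℓ : p ∈ ℓ)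
    (hℓ : 2 ≤ finrank F ℓ) {f g : Submodule F V × Submodule F V} (hf : IsFlag f) (hg : IsFlag g)
    (hfp : InStar p ℓ f) (hgp : InStar p ℓ g) : ¬ GenPos f g := by
  rintro ⟨hfg, hgf⟩
  have not_mem : ∀ {A B : Submodule F V}, A ⊓ B = ⊥ → p ∈ A → p ∈ B → False :=
    fun hAB hA hB => hp <| (Submodule.mem_bot F).1 (hAB ▸ Submodule.mem_inf.2 ⟨hA, hB⟩)
  rcases hfp with hpf | hℓf <;> rcases hgp with hpg | hℓg
  · exact not_mem hfg hpf (hg.2.2 hpg)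
  · exact not_mem hfg hpf (hℓg hpℓ)
  · exact not_mem hgf hpg (hℓf hpℓ)
  · have : FiniteDimensional F f.2 := Module.finite_of_finrank_pos (by rw [hf.2.1]; norm_num)
    refine inf_ne_bot_of_finrank_lt hf.2.2 hℓf (by rw [hf.1, hf.2.1]; omega) ?_
    exact eq_bot_iff.2 (hfg ▸ inf_le_inf_left _ hℓg)

structure StarCover (F V ι : Type*) [Field F] [AddCommGroup V] [Module F V] where
  point : ι → V
  line : ι → Submodule F V
  point_ne_zero : ∀ i, point i ≠ 0
  point_mem_line : ∀ i, point i ∈ line i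
  finrank_line : ∀ i, finrank F (line i) = 2
  exists_inStar : ∀ f, IsFlag f → ∃ i, InStar (point i) (line i) f

namespace StarCover

variable {V' ι : Type*} [AddCommGroup V'] [Module F V']

def map (C : StarCover F V ι) (e : V ≃ₗ[F] V') : StarCover F V' ι where
  point i := e (C.point i)
  line i := (C.line i).map (e : V →ₗ[F] V')
  point_ne_zero i := e.map_ne_zero_iff.2 (C.point_ne_zero i)
  point_mem_line i := Submodule.mem_map_of_mem (C.point_mem_line i)
  finrank_line i := (LinearEquiv.finrank_map_eq e _).trans (C.finrank_line i)
  exists_inStar f hf := by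
    obtain ⟨i, hi⟩ := C.exists_inStar _ (hf.map e.symm)
    refine ⟨i, hi.imp (fun h => by simpa using (Submodule.mem_map_equiv f.1).1 h) (fun h => ?_)⟩
    rw [Submodule.map_le_iff_le_comap, Submodule.comap_equiv_eq_map_symm]
    exact h

theorem chromaticNumber_le [Finite ι] (C : StarCover F V ι) :
    (Gamma F V).chromaticNumber ≤ Nat.card ι := by
  choose c hc using fun f : {f // IsFlag f} => C.exists_inStar f.1 f.2
  let col : (Gamma F V).Coloring ι := SimpleGraph.Coloring.mk c fun {f g} hadj hcg =>
    not_genPos_of_inStar (C.point_ne_zero _) (C.point_mem_line _) (C.finrank_line _).ge f.2 g.2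
      (hc f) (hcg ▸ hc g) hadj.2
  have := Fintype.ofFinite ι
  simpa [Nat.card_eq_fintype_card] using col.colorable.chromaticNumber_le

end StarCover

theorem finrank_ker_add_finrank_of_surjective {W : Type*} [AddCommGroup W] [Module F W]
    [FiniteDimensional F V] {π : V →ₗ[F] W} (hπ : Function.Surjective π) :
    finrank F (LinearMap.ker π) + finrank F W = finrank F V := by
  rw [← LinearMap.finrank_range_add_finrank_ker π, LinearMap.range_eq_top.2 hπ, finrank_top,
    add_comm]

/-- Coordinates `F⁷ = F e₀ × F e₁ × ⟨e₂, e₃, e₄⟩ × ⟨e₅, e₆⟩`, in which `basePoint = e₀`,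
`axisLine = ⟨e₀, e₁⟩` and `fourSpace = ⟨e₀, …, e₄⟩`. -/
abbrev SevenSpace (F : Type*) := F × F × (Fin 3 → F) × (Fin 2 → F)

namespace SevenSpace

open Projectivization

def basePoint : SevenSpace F := (1, 0, 0, 0)

def axisPoint (δ : F) : SevenSpace F := (δ, 1, 0, 0)

noncomputable def pointOf (a b : F) (P : ℙ F (Fin 3 → F)) : SevenSpace F := (a, b, P.rep, 0)

variable (F) in
def axisLine : Submodule F (SevenSpace F) :=
  LinearMap.ker (LinearMap.snd F F _ ∘ₗ LinearMap.snd F F _)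

variable (F) in
def fourSpace : Submodule F (SevenSpace F) :=
  LinearMap.ker (LinearMap.snd F _ _ ∘ₗ LinearMap.snd F F _ ∘ₗ LinearMap.snd F F _)

theorem mem_axisLine {x : SevenSpace F} : x ∈ axisLine F ↔ x.2.2 = 0 := Iff.rfl

theorem mem_fourSpace {x : SevenSpace F} : x ∈ fourSpace F ↔ x.2.2.2 = 0 := Iff.rfl

theorem finrank_eq : finrank F (SevenSpace F) = 7 := by
  simp

theorem finrank_axisLine : finrank F (axisLine F) = 2 := by
  have := finrank_ker_add_finrank_of_surjective (V := SevenSpace F)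
    (π := LinearMap.snd F F _ ∘ₗ LinearMap.snd F F _)
    fun y => ⟨(0, 0, y), rfl⟩
  rw [finrank_eq] at this
  simp only [finrank_prod, finrank_fin_fun] at this
  rw [axisLine]
  omega

theorem finrank_fourSpace : finrank F (fourSpace F) = 5 := by
  have := finrank_ker_add_finrank_of_surjective
    (V := SevenSpace F) (π := LinearMap.snd F _ _ ∘ₗ LinearMap.snd F F _ ∘ₗ LinearMap.snd F F _)
    fun y => ⟨(0, 0, 0, y), rfl⟩
  rw [finrank_eq] at this
  simp only [finrank_fin_fun] at this
  rw [fourSpace]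
  omega

theorem linearIndependent_pointOf_axisPoint (a b : F) (P : ℙ F (Fin 3 → F)) :
    LinearIndependent F ![pointOf a b P, axisPoint b] := by
  rw [LinearIndependent.pair_iff]
  intro s t h
  simp only [pointOf, axisPoint, Prod.smul_mk, Prod.mk_add_mk, Prod.mk_eq_zero, smul_zero,
    add_zero, smul_eq_mul, mul_one] at h
  obtain ⟨-, hb, hP, -⟩ := h
  have hs : s = 0 := (smul_eq_zero.1 hP).resolve_right P.rep_nonzero
  simp_all

theorem finrank_span_pointOf_axisPoint (a b : F) (P : ℙ F (Fin 3 → F)) :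
    finrank F (span F {pointOf a b P, axisPoint b}) = 2 := by
  rw [← Matrix.range_cons_cons_empty _ _ ![], finrank_span_eq_card
    (linearIndependent_pointOf_axisPoint a b P), Fintype.card_fin]

theorem pointOf_add_smul_axisPoint (a b s δ : F) (P : ℙ F (Fin 3 → F)) :
    pointOf a b P + s • axisPoint δ = pointOf (a + s * δ) (b + s) P := by
  simp [pointOf, axisPoint]

theorem exists_smul_eq_pointOf {v : SevenSpace F} (hvY : v ∈ fourSpace F) (hvL : v ∉ axisLine F) :
    ∃ (c a b : F) (P : ℙ F (Fin 3 → F)), c • v = pointOf a b P := by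
  obtain ⟨a, b, u, t⟩ := v
  obtain rfl : t = 0 := hvY
  have hu : u ≠ 0 := fun hu => hvL (by simp [mem_axisLine, hu])
  obtain ⟨c, hc⟩ := exists_smul_eq_mk_rep F u hu
  exact ⟨c, c * a, c * b, mk F u hu, by simp [pointOf, ← hc, Units.smul_def]⟩

theorem exists_smul_eq_basePoint_or_axisPoint {z : SevenSpace F} (hz : z ∈ axisLine F) (hz0 : z ≠ 0) :
    (∃ c : F, c • z = basePoint) ∨ ∃ c δ : F, c • z = axisPoint δ := by
  obtain ⟨a, b, u, t⟩ := z
  obtain ⟨rfl, rfl⟩ := Prod.mk_eq_zero.1 (mem_axisLine.1 hz)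
  by_cases hb : b = 0
  · subst hb
    have ha : a ≠ 0 := by simpa using hz0
    exact Or.inl ⟨a⁻¹, by simp [basePoint, ha]⟩
  · exact Or.inr ⟨b⁻¹, b⁻¹ * a, by simp [axisPoint, hb]⟩

noncomputable def starPoint : Option (F × F × ℙ F (Fin 3 → F)) → SevenSpace F
  | none => basePoint
  | some (a, b, P) => pointOf a b P

noncomputable def starLine : Option (F × F × ℙ F (Fin 3 → F)) → Submodule F (SevenSpace F)
  | none => axisLine F
  | some (a, b, P) => span F {pointOf a b P, axisPoint b}

theorem exists_starLine_le {S : Submodule F (SevenSpace F)} {δ : F} (hδS : axisPoint δ ∈ S)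
    {v : SevenSpace F} (hvS : v ∈ S) (hvY : v ∈ fourSpace F) (hvL : v ∉ axisLine F) :
    ∃ i, starLine i ≤ S := by
  obtain ⟨c, a, b, P, hc⟩ := exists_smul_eq_pointOf hvY hvL
  have hpS : pointOf (a + (δ - b) * δ) δ P ∈ S := by
    have := S.add_mem (S.smul_mem c hvS) (S.smul_mem (δ - b) hδS)
    rwa [hc, pointOf_add_smul_axisPoint, add_sub_cancel] at this
  refine ⟨some (a + (δ - b) * δ, δ, P), ?_⟩
  rw [starLine, span_le, Set.insert_subset_iff, Set.singleton_subset_iff]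
  exact ⟨hpS, hδS⟩

theorem exists_inStar {f : Submodule F (SevenSpace F) × Submodule F (SevenSpace F)} (hf : IsFlag f) :
    ∃ i, InStar (starPoint i) (starLine i) f := by
  obtain ⟨hE, hS, hES⟩ := hf
  by_cases hEY : f.1 ⊓ fourSpace F ≤ axisLine F
  case neg =>
    obtain ⟨v, hv, hvL⟩ := SetLike.not_le_iff_exists.1 hEY
    obtain ⟨hvE, hvY⟩ := Submodule.mem_inf.1 hv
    obtain ⟨c, a, b, P, hc⟩ := exists_smul_eq_pointOf hvY hvL
    exact ⟨some (a, b, P), Or.inl (show pointOf a b P ∈ f.1 from hc ▸ f.1.smul_mem c hvE)⟩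
  obtain ⟨z, hz, hz0⟩ := Submodule.exists_mem_ne_zero_of_ne_bot <|
    inf_ne_bot_of_finrank_lt (A := f.1) (B := fourSpace F) le_top le_top
      (by rw [finrank_top, finrank_eq, hE, finrank_fourSpace]; norm_num)
  have hzE := (Submodule.mem_inf.1 hz).1
  obtain ⟨c, hc⟩ | ⟨c, δ, hc⟩ := exists_smul_eq_basePoint_or_axisPoint (hEY hz) hz0
  · exact ⟨none, Or.inl (show basePoint ∈ f.1 from hc ▸ f.1.smul_mem c hzE)⟩
  by_cases hSY : f.2 ⊓ fourSpace F ≤ axisLine F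
  · have hdim := finrank_add_finrank_le_finrank_add_finrank_inf
      (A := f.2) (B := fourSpace F) le_top le_top
    rw [finrank_top, finrank_eq, hS, finrank_fourSpace] at hdim
    have : f.2 ⊓ fourSpace F = axisLine F :=
      Submodule.eq_of_le_of_finrank_le hSY (by rw [finrank_axisLine]; omega)
    exact ⟨none, Or.inr (show axisLine F ≤ f.2 from this ▸ inf_le_left)⟩
  obtain ⟨v, hv, hvL⟩ := SetLike.not_le_iff_exists.1 hSY
  obtain ⟨hvS, hvY⟩ := Submodule.mem_inf.1 hv
  obtain ⟨i, hi⟩ := exists_starLine_le (hc ▸ f.2.smul_mem c (hES hzE)) hvS hvY hvL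
  exact ⟨i, Or.inr hi⟩

noncomputable def starCover : StarCover F (SevenSpace F) (Option (F × F × ℙ F (Fin 3 → F))) where
  point := starPoint
  line := starLine
  point_ne_zero
    | none => by simp [starPoint, basePoint]
    | some (a, b, P) => by simp [starPoint, pointOf, P.rep_nonzero]
  point_mem_line
    | none => by simp [starPoint, starLine, basePoint, mem_axisLine]
    | some (a, b, P) => subset_span (Set.mem_insert _ _)
  finrank_line
    | none => finrank_axisLine
    | some (a, b, P) => finrank_span_pointOf_axisPoint a b P
  exists_inStar _ := exists_inStar

theorem card_starIndex [Fintype F] {q : ℕ} (hq : Fintype.card F = q) :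
    Nat.card (Option (F × F × ℙ F (Fin 3 → F))) = q ^ 4 + q ^ 3 + q ^ 2 + 1 := by
  rw [Finite.card_option, Nat.card_prod, Nat.card_prod,
    card_of_finrank (k := F) (V := Fin 3 → F) (finrank_fin_fun F), Nat.card_eq_fintype_card, hq]
  simp only [Finset.sum_range_succ, Finset.range_one, Finset.sum_singleton, pow_zero, pow_one,
    Nat.add_right_cancel_iff]
  ring

end SevenSpace

theorem stmt5_general {q : ℕ} [Fintype F]
    (hq : Fintype.card F = q) (hV : Module.finrank F V = 7) :
    (Gamma F V).chromaticNumber ≤ ((q ^ 4 + q ^ 3 + q ^ 2 + 1 : ℕ) : ℕ∞) := by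
  have : FiniteDimensional F V := Module.finite_of_finrank_pos (by omega)
  let e : V ≃ₗ[F] SevenSpace F :=
    LinearEquiv.ofFinrankEq V (SevenSpace F) (by rw [hV, SevenSpace.finrank_eq])
  rw [← SevenSpace.card_starIndex hq]
  exact (SevenSpace.starCover.map e.symm).chromaticNumber_le

theorem stmt5 {q : ℕ} [Fintype F] [FiniteDimensional F V]
    (hq : Fintype.card F = q) (hV : Module.finrank F V = 7) :
    (Gamma F V).chromaticNumber ≤ ((q ^ 4 + q ^ 3 + q ^ 2 + 1 : ℕ) : ℕ∞) :=
  stmt5_general hq hV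
end

section
/- Let H be a hyperplane of PG(6,q). Then the set Λ(H,∅) of all plane-solid flags (E,S) with S ⊆ H is an independent set. Moreover, a set C of plane-solid flags is a maximal independent set containing Λ(H,∅) if and only if C = Λ(H,𝓔) for some maximal intersecting set 𝓔 of planes of H. -/
variable {F V : Type*} [Field F] [AddCommGroup V] [Module F V]

/-- Λ(H,𝓔): all plane-solid flags (E,S) with S ⊆ H or E ∈ 𝓔. -/
def LambdaH (H : Submodule F V) (E : Set (Submodule F V)) :
    Set (Submodule F V × Submodule F V) :=
  {f | IsFlag f ∧ (f.2 ≤ H ∨ f.1 ∈ E)}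

/-- A maximal intersecting set of planes of H. -/
def MaxPlaneSet (H : Submodule F V) (E : Set (Submodule F V)) : Prop :=
  (∀ E₁ ∈ E, Module.finrank F E₁ = 3 ∧ E₁ ≤ H) ∧
  (∀ E₁ ∈ E, ∀ E₂ ∈ E, E₁ ⊓ E₂ ≠ ⊥) ∧
  ∀ E' : Set (Submodule F V),
    ((∀ E₁ ∈ E', Module.finrank F E₁ = 3 ∧ E₁ ≤ H) ∧
      ∀ E₁ ∈ E', ∀ E₂ ∈ E', E₁ ⊓ E₂ ≠ ⊥) → E ⊆ E' → E = E'

/-!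
Let `C` be an independent set containing `Λ(H,∅)`. A flag `(E,S)` of `C` has `E ≤ H`: otherwise
`E ∩ H` is at most a line and `S ∩ H` at most a plane, and counting dimensions in `H` gives a plane
`U ≤ H` missing `S ∩ H` and a solid `U ≤ S' ≤ H` missing `E ∩ H`, so that `(U,S') ∈ Λ(H,∅)` is in
general position with `(E,S)`. If moreover `S ⊄ H`, then `S ∩ H = E`, so for two such flags
general position just means that the planes are disjoint. Hence the planes of the flags of `C`
with solid outside `H` form an intersecting set `𝓕` with `C ⊆ Λ(H,𝓕)`. Finally `Λ(H,·)` reflects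
inclusion on sets of planes of `H`, since every plane of `H` lies in a solid not contained in `H`;
this transports maximality in both directions.
-/

open Module Submodule

theorem inf_eq_inf_inf_of_le {α : Type*} [SemilatticeInf α] {a b c : α} (h : a ≤ c) :
    a ⊓ b = a ⊓ (b ⊓ c) := by
  rw [← inf_assoc, inf_right_comm, inf_eq_left.mpr h]

def outerPlanes (H : Submodule F V) (C : Set (Submodule F V × Submodule F V)) :
    Set (Submodule F V) :=
  {E | ∃ S, (E, S) ∈ C ∧ ¬ S ≤ H}

def IsIntersectingPlaneSet (H : Submodule F V) (𝓔 : Set (Submodule F V)) : Prop :=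
  (∀ E ∈ 𝓔, finrank F E = 3 ∧ E ≤ H) ∧ ∀ E₁ ∈ 𝓔, ∀ E₂ ∈ 𝓔, E₁ ⊓ E₂ ≠ ⊥

theorem isIntersectingPlaneSet_empty (H : Submodule F V) : IsIntersectingPlaneSet H ∅ := by
  simp [IsIntersectingPlaneSet]

theorem maxPlaneSet_iff_maximal {H : Submodule F V} {𝓔 : Set (Submodule F V)} :
    MaxPlaneSet H 𝓔 ↔ Maximal (IsIntersectingPlaneSet H) 𝓔 := by
  rw [maximal_iff, IsIntersectingPlaneSet, and_assoc]
  exact Iff.rfl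

theorem isMaxIndep_iff_maximal {C : Set (Submodule F V × Submodule F V)} :
    IsMaxIndep C ↔ Maximal IsIndep C :=
  maximal_iff.symm

theorem lambdaH_mono (H : Submodule F V) : Monotone (LambdaH H) :=
  fun _ _ h _ ⟨hf, hf'⟩ => ⟨hf, hf'.imp_right (@h _)⟩

theorem subset_lambdaH_outerPlanes (H : Submodule F V) {C : Set (Submodule F V × Submodule F V)}
    (hC : ∀ f ∈ C, IsFlag f) : C ⊆ LambdaH H (outerPlanes H C) := by
  intro f hf
  by_cases hS : f.2 ≤ H
  · exact ⟨hC f hf, Or.inl hS⟩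
  · exact ⟨hC f hf, Or.inr ⟨f.2, hf, hS⟩⟩

theorem IsFlag.fst_ne_bot {f : Submodule F V × Submodule F V} (hf : IsFlag f) : f.1 ≠ ⊥ := by
  intro h
  have h3 := hf.1
  rw [h, finrank_bot] at h3
  omega

theorem IsFlag.not_genPos_self {f : Submodule F V × Submodule F V} (hf : IsFlag f) :
    ¬ GenPos f f :=
  fun h => hf.fst_ne_bot (by rw [← h.1, inf_eq_left.mpr hf.2.2])

theorem IsIndep.not_genPos {C : Set (Submodule F V × Submodule F V)} (hC : IsIndep C)
    {f g : Submodule F V × Submodule F V} (hf : f ∈ C) (hg : g ∈ C) : ¬ GenPos f g := by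
  rcases eq_or_ne f g with rfl | hfg
  · exact (hC.1 f hf).not_genPos_self
  · exact hC.2 f hf g hg hfg

section FiniteDimensional

variable [FiniteDimensional F V]

theorem inf_ne_bot_of_finrank_lt_add {W A B : Submodule F V} (hA : A ≤ W) (hB : B ≤ W)
    (h : finrank F W < finrank F A + finrank F B) : A ⊓ B ≠ ⊥ := by
  intro hAB
  have hdim := Submodule.finrank_sup_add_finrank_inf_eq A B
  have hsup : finrank F ↥(A ⊔ B) ≤ finrank F W := Submodule.finrank_mono (sup_le hA hB)
  rw [hAB, finrank_bot] at hdim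
  omega

theorem exists_finrank_succ_inf_eq_bot {A L W : Submodule F V} (hA : A ≤ W) (hL : L ≤ W)
    (hAL : A ⊓ L = ⊥) (h : finrank F A + finrank F L < finrank F W) :
    ∃ S, A ≤ S ∧ S ≤ W ∧ S ⊓ L = ⊥ ∧ finrank F S = finrank F A + 1 := by
  have hAL_dim := Submodule.finrank_sup_add_finrank_inf_eq A L
  rw [hAL, finrank_bot, add_zero] at hAL_dim
  have hlt : A ⊔ L < W := (sup_le hA hL).lt_of_ne fun hW => by rw [hW] at hAL_dim; omega
  obtain ⟨x, hxW, hxAL⟩ := SetLike.exists_of_lt hlt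
  have hxA : x ∉ A := fun hx => hxAL (mem_sup_left hx)
  refine ⟨A ⊔ span F {x}, le_sup_left, sup_le hA ((span_singleton_le_iff_mem x W).mpr hxW),
    ?_, finrank_sup_span_singleton hxA⟩
  -- `x ∉ A ⊔ L` makes the dimension of `A + ⟨x⟩ + L` add up, so the intersection is trivial.
  have hsum := Submodule.finrank_sup_add_finrank_inf_eq (A ⊔ span F {x}) L
  rw [sup_right_comm, finrank_sup_span_singleton hxAL, hAL_dim,
    finrank_sup_span_singleton hxA] at hsum
  exact Submodule.finrank_eq_zero.mp (by omega)

theorem exists_le_finrank_eq_inf_eq_bot {L W : Submodule F V} (hL : L ≤ W) :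
    ∀ k, finrank F L + k ≤ finrank F W → ∃ U ≤ W, U ⊓ L = ⊥ ∧ finrank F U = k
  | 0, _ => ⟨⊥, bot_le, bot_inf_eq L, finrank_bot F V⟩
  | k + 1, h => by
    obtain ⟨U, hUW, hUL, hU⟩ := exists_le_finrank_eq_inf_eq_bot hL k (by omega)
    obtain ⟨S, -, hSW, hSL, hS⟩ := exists_finrank_succ_inf_eq_bot hUW hL hUL (by omega)
    exact ⟨S, hSW, hSL, by rw [hS, hU]⟩

theorem exists_isFlag_not_le {H E : Submodule F V} (hH : H ≠ ⊤) (hE : finrank F E = 3)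
    (hEH : E ≤ H) : ∃ S, IsFlag (E, S) ∧ ¬ S ≤ H := by
  obtain ⟨x, -, hx⟩ := SetLike.exists_of_lt hH.lt_top
  refine ⟨E ⊔ span F {x}, ⟨hE, ?_, le_sup_left⟩, fun hS => hx (hS ?_)⟩
  · rw [finrank_sup_span_singleton fun h => hx (hEH h), hE]
  · exact mem_sup_right (mem_span_singleton_self x)

variable {H : Submodule F V}

theorem subset_of_lambdaH_subset (hH : H ≠ ⊤) {𝓔 𝓔' : Set (Submodule F V)}
    (h𝓔 : ∀ E ∈ 𝓔, finrank F E = 3 ∧ E ≤ H) (h : LambdaH H 𝓔 ⊆ LambdaH H 𝓔') : 𝓔 ⊆ 𝓔' := by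
  intro E hE
  obtain ⟨S, hS, hSH⟩ := exists_isFlag_not_le hH (h𝓔 E hE).1 (h𝓔 E hE).2
  exact (h ⟨hS, Or.inr hE⟩).2.resolve_left hSH

theorem IsFlag.snd_inf_eq_fst {f : Submodule F V × Submodule F V} (hf : IsFlag f)
    (hE : f.1 ≤ H) (hS : ¬ f.2 ≤ H) : f.2 ⊓ H = f.1 := by
  have hlt := Submodule.finrank_lt_finrank_of_lt (inf_lt_left.mpr hS)
  rw [hf.2.1] at hlt
  exact (Submodule.eq_of_le_of_finrank_le (le_inf hf.2.2 hE) (by rw [hf.1]; omega)).symm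

theorem genPos_iff_inf_eq_bot {f g : Submodule F V × Submodule F V} (hf : IsFlag f)
    (hg : IsFlag g) (hfE : f.1 ≤ H) (hgE : g.1 ≤ H) (hfS : ¬ f.2 ≤ H) (hgS : ¬ g.2 ≤ H) :
    GenPos f g ↔ f.1 ⊓ g.1 = ⊥ := by
  rw [GenPos, inf_eq_inf_inf_of_le hfE, inf_eq_inf_inf_of_le hgE, hf.snd_inf_eq_fst hfE hfS,
    hg.snd_inf_eq_fst hgE hgS, inf_comm g.1, and_self]

theorem IsFlag.fst_inf_snd_ne_bot (hH : finrank F H = 6) {f g : Submodule F V × Submodule F V}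
    (hf : IsFlag f) (hg : IsFlag g) (hfE : f.1 ≤ H) (hgS : g.2 ≤ H) : f.1 ⊓ g.2 ≠ ⊥ :=
  inf_ne_bot_of_finrank_lt_add hfE hgS (by rw [hH, hf.1, hg.2.1]; norm_num)

theorem IsFlag.exists_genPos_of_not_le (hH : finrank F H = 6)
    {f : Submodule F V × Submodule F V} (hf : IsFlag f) (hE : ¬ f.1 ≤ H) :
    ∃ g ∈ LambdaH H ∅, GenPos f g := by
  have hS : ¬ f.2 ≤ H := fun h => hE (hf.2.2.trans h)
  have hP := Submodule.finrank_lt_finrank_of_lt (inf_lt_left.mpr hS)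
  have hL := Submodule.finrank_lt_finrank_of_lt (inf_lt_left.mpr hE)
  rw [hf.2.1] at hP
  rw [hf.1] at hL
  obtain ⟨U, hUH, hUP, hU⟩ := exists_le_finrank_eq_inf_eq_bot (inf_le_right : f.2 ⊓ H ≤ H) 3
    (by omega)
  have hUL : U ⊓ (f.1 ⊓ H) = ⊥ :=
    eq_bot_iff.mpr (hUP ▸ inf_le_inf_left U (inf_le_inf_right H hf.2.2))
  obtain ⟨S, hUS, hSH, hSL, hS'⟩ := exists_finrank_succ_inf_eq_bot hUH inf_le_right hUL
    (by omega)
  refine ⟨(U, S), ⟨⟨hU, by dsimp only; omega, hUS⟩, Or.inl hSH⟩, ?_, ?_⟩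
  · exact eq_bot_iff.mpr (hSL ▸ le_inf inf_le_right (le_inf inf_le_left (inf_le_right.trans hSH)))
  · rw [inf_eq_inf_inf_of_le hUH, hUP]

theorem IsIndep.fst_le (hH : finrank F H = 6) {C : Set (Submodule F V × Submodule F V)}
    (hC : IsIndep C) (hΛ : LambdaH H ∅ ⊆ C) {f : Submodule F V × Submodule F V} (hf : f ∈ C) :
    f.1 ≤ H := by
  by_contra hE
  obtain ⟨g, hg, hfg⟩ := (hC.1 f hf).exists_genPos_of_not_le hH hE
  exact hC.not_genPos hf (hΛ hg) hfg

theorem IsIndep.isIntersectingPlaneSet_outerPlanes (hH : finrank F H = 6)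
    {C : Set (Submodule F V × Submodule F V)} (hC : IsIndep C) (hΛ : LambdaH H ∅ ⊆ C) :
    IsIntersectingPlaneSet H (outerPlanes H C) := by
  refine ⟨fun E ⟨S, hES, _⟩ => ⟨(hC.1 _ hES).1, hC.fst_le hH hΛ hES⟩, ?_⟩
  rintro E₁ ⟨S₁, h₁, hS₁⟩ E₂ ⟨S₂, h₂, hS₂⟩ hE
  exact hC.not_genPos h₁ h₂ ((genPos_iff_inf_eq_bot (hC.1 _ h₁) (hC.1 _ h₂)
    (hC.fst_le hH hΛ h₁) (hC.fst_le hH hΛ h₂) hS₁ hS₂).mpr hE)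

theorem isIndep_lambdaH (hH : finrank F H = 6) {𝓔 : Set (Submodule F V)}
    (h𝓔 : IsIntersectingPlaneSet H 𝓔) : IsIndep (LambdaH H 𝓔) := by
  have hle : ∀ f ∈ LambdaH H 𝓔, f.1 ≤ H := fun f ⟨hf, h⟩ =>
    h.elim (hf.2.2.trans ·) fun hE => (h𝓔.1 _ hE).2
  refine ⟨fun f hf => hf.1, fun f hf g hg _ ⟨h₁, h₂⟩ => ?_⟩
  rcases hg.2 with hgH | hg𝓔
  · exact hf.1.fst_inf_snd_ne_bot hH hg.1 (hle f hf) hgH h₁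
  rcases hf.2 with hfH | hf𝓔
  · exact hg.1.fst_inf_snd_ne_bot hH hf.1 (hle g hg) hfH h₂
  · exact h𝓔.2 _ hf𝓔 _ hg𝓔 (eq_bot_iff.mpr (h₁ ▸ inf_le_inf_left _ hg.1.2.2))

theorem exists_maximal_eq_lambdaH (hH : finrank F H = 6) (hHtop : H ≠ ⊤)
    {C : Set (Submodule F V × Submodule F V)} (hC : Maximal IsIndep C) (hΛ : LambdaH H ∅ ⊆ C) :
    ∃ 𝓔, Maximal (IsIntersectingPlaneSet H) 𝓔 ∧ C = LambdaH H 𝓔 := by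
  have h𝓕 := hC.prop.isIntersectingPlaneSet_outerPlanes hH hΛ
  have hC𝓕 : C = LambdaH H (outerPlanes H C) :=
    hC.eq_of_subset (isIndep_lambdaH hH h𝓕) (subset_lambdaH_outerPlanes H hC.prop.1)
  refine ⟨outerPlanes H C, ⟨h𝓕, fun 𝓔 h𝓔 hle => ?_⟩, hC𝓕⟩
  refine subset_of_lambdaH_subset hHtop h𝓔.1 (hC𝓕 ▸ hC.2 (isIndep_lambdaH hH h𝓔) ?_)
  exact hC𝓕 ▸ lambdaH_mono H hle

theorem maximal_isIndep_lambdaH (hH : finrank F H = 6) (hHtop : H ≠ ⊤) {𝓔 : Set (Submodule F V)}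
    (h𝓔 : Maximal (IsIntersectingPlaneSet H) 𝓔) : Maximal IsIndep (LambdaH H 𝓔) := by
  refine ⟨isIndep_lambdaH hH h𝓔.prop, fun D hD hle => ?_⟩
  have h𝓕 := hD.isIntersectingPlaneSet_outerPlanes hH
    ((lambdaH_mono H (Set.empty_subset 𝓔)).trans hle)
  have hD𝓕 := subset_lambdaH_outerPlanes H hD.1
  have h𝓔𝓕 := subset_of_lambdaH_subset hHtop h𝓔.prop.1 (hle.trans hD𝓕)
  exact hD𝓕.trans (lambdaH_mono H (h𝓔.2 h𝓕 h𝓔𝓕))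

end FiniteDimensional

theorem stmt6_general [FiniteDimensional F V]
    (hV : Module.finrank F V = 7)
    (H : Submodule F V) (hH : Module.finrank F H = 6) :
    IsIndep (LambdaH H (∅ : Set (Submodule F V))) ∧
    ∀ C : Set (Submodule F V × Submodule F V),
      (IsMaxIndep C ∧ LambdaH H (∅ : Set (Submodule F V)) ⊆ C) ↔
        ∃ E : Set (Submodule F V), MaxPlaneSet H E ∧ C = LambdaH H E := by
  have hHtop : H ≠ ⊤ := by
    rintro rfl
    rw [finrank_top, hV] at hH
    omega
  refine ⟨isIndep_lambdaH hH (isIntersectingPlaneSet_empty H), fun C => ?_⟩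
  simp only [isMaxIndep_iff_maximal, maxPlaneSet_iff_maximal]
  constructor
  · rintro ⟨hC, hΛ⟩
    exact exists_maximal_eq_lambdaH hH hHtop hC hΛ
  · rintro ⟨𝓔, h𝓔, rfl⟩
    exact ⟨maximal_isIndep_lambdaH hH hHtop h𝓔, lambdaH_mono H (Set.empty_subset 𝓔)⟩

theorem stmt6 {q : ℕ} [Fintype F] [FiniteDimensional F V]
    (hq : Fintype.card F = q) (hV : Module.finrank F V = 7)
    (H : Submodule F V) (hH : Module.finrank F H = 6) :
    IsIndep (LambdaH H (∅ : Set (Submodule F V))) ∧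
    ∀ C : Set (Submodule F V × Submodule F V),
      (IsMaxIndep C ∧ LambdaH H (∅ : Set (Submodule F V)) ⊆ C) ↔
        ∃ E : Set (Submodule F V), MaxPlaneSet H E ∧ C = LambdaH H E :=
  stmt6_general hV H hH
end

section
/- Let K and L be linear subspaces of W with K ∩ L = 0, dim K = a and dim L = b, and let c be a natural number with a ≤ c ≤ N − b. Then the number of c-dimensional linear subspaces D of W with K ⊆ D and D ∩ L = 0 equals q^{b·(c−a)} · ∏_{i=1}^{c−a} (q^{N−a−b+1−i} − 1)/(q^i − 1). -/
/-!
When `K = 0`, count in two ways the `c`-tuples of vectors of `W` whose images in `W ⧸ L` are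
linearly independent. Grouped by their span, which is a `c`-dimensional subspace `D` with
`D ∩ L = 0`, every such `D` occurs once for each of its `∏ (q^c - q^i)` ordered bases. On the other
hand, a splitting `W ≃ (W ⧸ L) × L` shows that there are `q^(bc) ∏ (q^(N-b) - q^i)` of them.
In general, subspaces containing `K` are the preimages of subspaces of `W ⧸ K`, and `L` maps
isomorphically into `W ⧸ K`.
-/

open Module Submodule Finset

theorem prod_range_pow_sub_pow_div_pow_sub_pow {K : Type*} [Field K] {x : K} (hx : x ≠ 0)
    {m c : ℕ} (hcm : c ≤ m) :
    ∏ i ∈ range c, (x ^ m - x ^ i) / (x ^ c - x ^ i) =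
      ∏ i ∈ Icc 1 c, (x ^ (m + 1 - i) - 1) / (x ^ i - 1) := by
  have factor {k i : ℕ} (hi : i ≤ k) : x ^ k - x ^ i = x ^ i * (x ^ (k - i) - 1) := by
    rw [mul_sub, ← pow_add, Nat.add_sub_cancel' hi, mul_one]
  calc ∏ i ∈ range c, (x ^ m - x ^ i) / (x ^ c - x ^ i)
      = (∏ i ∈ range c, (x ^ (m - i) - 1)) / ∏ i ∈ range c, (x ^ (c - 1 - i + 1) - 1) := by
        rw [← prod_div_distrib]
        refine prod_congr rfl fun i hi ↦ ?_
        have hic := mem_range.mp hi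
        rw [factor (by omega : i ≤ m), factor hic.le, mul_div_mul_left _ _ (pow_ne_zero _ hx)]
        congr 3
        omega
    _ = ∏ i ∈ range c, (x ^ (m + 1 - (i + 1)) - 1) / (x ^ (i + 1) - 1) := by
        rw [prod_range_reflect (fun i ↦ x ^ (i + 1) - 1), ← prod_div_distrib]
        simp only [Nat.add_sub_add_right]
    _ = ∏ i ∈ Icc 1 c, (x ^ (m + 1 - i) - 1) / (x ^ i - 1) := by
        rw [← Ico_add_one_right_eq_Icc, range_eq_Ico,
          prod_Ico_add' (fun i ↦ (x ^ (m + 1 - i) - 1) / (x ^ i - 1)), zero_add]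

theorem Nat.cast_prod_pow_sub_pow {R : Type*} [CommRing R] {q k c : ℕ} (hq : 0 < q)
    (hc : c ≤ k) :
    ((∏ i : Fin c, (q ^ k - q ^ i.val) : ℕ) : R) =
      ∏ i ∈ range c, ((q : R) ^ k - (q : R) ^ i) := by
  rw [Nat.cast_prod, Fin.prod_univ_eq_prod_range (fun i ↦ ((q ^ k - q ^ i : ℕ) : R))]
  refine prod_congr rfl fun i hi ↦ ?_
  rw [Nat.cast_sub (Nat.pow_le_pow_right hq ((mem_range.mp hi).le.trans hc)), Nat.cast_pow,
    Nat.cast_pow]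

namespace Submodule

section Ring

variable {R V : Type*} [Ring R] [AddCommGroup V] [Module R V]

theorem linearIndependent_mkQ_comp_iff (L : Submodule R V) {ι : Type*} {f : ι → V} :
    LinearIndependent R (L.mkQ ∘ f) ↔
      LinearIndependent R f ∧ Disjoint (span R (Set.range f)) L := by
  refine ⟨fun h ↦ ⟨h.of_comp _, by simpa using range_ker_disjoint h⟩, fun ⟨hf, hd⟩ ↦ ?_⟩
  exact (L.mkQ.linearIndependent_iff_of_disjoint (by simpa using hd)).mpr hf

theorem disjoint_comap_mkQ_iff {K L : Submodule R V} (hKL : Disjoint K L)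
    (D' : Submodule R (V ⧸ K)) : Disjoint (D'.comap K.mkQ) L ↔ Disjoint D' (L.map K.mkQ) := by
  refine ⟨fun h ↦ ?_, fun h ↦ disjoint_def.mpr fun x hxD hxL ↦ ?_⟩
  · simpa [map_comap_eq_of_surjective K.mkQ_surjective] using
      disjoint_map_of_ker_le_left (f := K.mkQ) h (by simpa using K.le_comap_mkQ D')
  · have hx : K.mkQ x = 0 := disjoint_def.mp h _ hxD (mem_map_of_mem hxL)
    exact disjoint_def.mp hKL x ((Quotient.mk_eq_zero K).mp hx) hxL

end Ring

section DivisionRing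

variable {F V V₂ : Type*} [DivisionRing F] [AddCommGroup V] [Module F V]
  [AddCommGroup V₂] [Module F V₂]

theorem finrank_map_of_disjoint_ker (f : V →ₗ[F] V₂) {L : Submodule F V}
    (h : Disjoint L (LinearMap.ker f)) : finrank F (L.map f) = finrank F L := by
  have hinj : Function.Injective (f ∘ₗ L.subtype) := by
    rw [← LinearMap.ker_eq_bot, LinearMap.ker_comp, ← disjoint_iff_comap_eq_bot]
    exact h
  rw [← LinearMap.finrank_range_of_inj hinj, LinearMap.range_comp, range_subtype]

theorem card_linearIndependent_mkQ_comp (L : Submodule F V) (ι : Type*) [Finite ι] :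
    Nat.card {f : ι → V // LinearIndependent F (L.mkQ ∘ f)} =
      Nat.card {g : ι → V ⧸ L // LinearIndependent F g} * Nat.card L ^ Nat.card ι := by
  obtain ⟨C, hC⟩ := L.exists_isCompl
  let e : V ≃ₗ[F] (V ⧸ L) × L := (prodEquivOfIsCompl C L hC.symm).symm ≪≫ₗ
    (quotientEquivOfIsCompl L C hC).symm.prodCongr (LinearEquiv.refl F L)
  have he : ∀ v, (e v).1 = L.mkQ v := fun v ↦ by
    simp [e, Quotient.eq, sub_mem_comm_iff, sub_projection_mem]
  let split : (ι → V) ≃ (ι → V ⧸ L) × (ι → L) :=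
    (Equiv.arrowCongr (.refl ι) e.toEquiv).trans (Equiv.arrowProdEquivProdArrow _ _ _)
  have hsplit : ∀ f, (split f).1 = L.mkQ ∘ f := fun f ↦ funext fun i ↦ he (f i)
  rw [← Nat.card_fun, ← Nat.card_prod]
  exact Nat.card_congr <| (split.subtypeEquiv fun f ↦ by rw [hsplit]).trans
    Equiv.prodSubtypeFstEquivSubtypeProd

end DivisionRing

section FiniteDimensional

variable {F V : Type*} [DivisionRing F] [AddCommGroup V] [Module F V] [FiniteDimensional F V]

def linearIndependentSpanEqEquiv (D : Submodule F V) {c : ℕ} (hD : finrank F D = c) :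
    {f : Fin c → V // LinearIndependent F f ∧ span F (Set.range f) = D} ≃
      {g : Fin c → D // LinearIndependent F g} where
  toFun f :=
    ⟨fun i ↦ ⟨f.1 i, f.2.2.le (subset_span ⟨i, rfl⟩)⟩, .of_comp D.subtype f.2.1⟩
  invFun g := by
    refine ⟨D.subtype ∘ g, g.2.map' _ D.ker_subtype, eq_of_le_of_finrank_le ?_ ?_⟩
    · rw [span_le]; rintro _ ⟨i, rfl⟩; exact (g.1 i).2
    · rw [hD, finrank_span_eq_card (g.2.map' _ D.ker_subtype), Fintype.card_fin]
  left_inv _ := rfl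
  right_inv _ := rfl

variable [Fintype F]

theorem card_linearIndependent_mkQ_comp_eq_ncard_mul (L : Submodule F V) (c : ℕ) :
    Nat.card {f : Fin c → V // LinearIndependent F (L.mkQ ∘ f)} =
      {D : Submodule F V | finrank F D = c ∧ Disjoint D L}.ncard *
        ∏ i : Fin c, (Fintype.card F ^ c - Fintype.card F ^ i.val) := by
  have : Finite V := Module.finite_of_finite F
  let S := {D : Submodule F V | finrank F D = c ∧ Disjoint D L}
  let spanOf : {f : Fin c → V // LinearIndependent F (L.mkQ ∘ f)} → S := fun f ↦
    have hf := (L.linearIndependent_mkQ_comp_iff).mp f.2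
    ⟨span F (Set.range f.1), by rw [finrank_span_eq_card hf.1, Fintype.card_fin], hf.2⟩
  have card_fiber (D : S) : Nat.card {f // spanOf f = D} =
      ∏ i : Fin c, (Fintype.card F ^ c - Fintype.card F ^ i.val) := by
    have hD := D.2
    have card_bases := card_linearIndependent (K := F) (V := D.1) hD.1.ge
    rw [hD.1] at card_bases
    rw [← card_bases]
    refine Nat.card_congr <| (Equiv.subtypeEquivRight fun f ↦ Subtype.ext_iff).trans <|
      (Equiv.subtypeSubtypeEquivSubtypeInter _ (fun f ↦ span F (Set.range f) = D)).trans <|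
      (Equiv.subtypeEquivRight fun f ↦ ?_).trans (linearIndependentSpanEqEquiv D.1 hD.1)
    rw [linearIndependent_mkQ_comp_iff]
    exact ⟨fun h ↦ ⟨h.1.1, h.2⟩, fun h ↦ ⟨⟨h.1, h.2 ▸ hD.2⟩, h.2⟩⟩
  have : Fintype S := Fintype.ofFinite S
  rw [← Nat.card_congr (Equiv.sigmaFiberEquiv spanOf), Nat.card_sigma,
    Finset.sum_congr rfl fun D _ ↦ card_fiber D, Finset.sum_const, Finset.card_univ, smul_eq_mul,
    ← Nat.card_eq_fintype_card, Nat.card_coe_set_eq]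

theorem ncard_finrank_eq_disjoint (L : Submodule F V) {c : ℕ} (hc : c ≤ finrank F (V ⧸ L)) :
    ({D : Submodule F V | finrank F D = c ∧ Disjoint D L}.ncard : ℚ) =
      (Fintype.card F : ℚ) ^ (finrank F L * c) *
        ∏ i ∈ Icc 1 c, ((Fintype.card F : ℚ) ^ (finrank F (V ⧸ L) + 1 - i) - 1) /
          ((Fintype.card F : ℚ) ^ i - 1) := by
  have : Finite (V ⧸ L) := Module.finite_of_finite F
  have hq : 1 < Fintype.card F := Fintype.one_lt_card
  have count := (card_linearIndependent_mkQ_comp_eq_ncard_mul L c).symm.trans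
    (card_linearIndependent_mkQ_comp L (Fin c))
  rw [card_linearIndependent hc, Module.natCard_eq_pow_finrank (K := F), Nat.card_eq_fintype_card,
    Nat.card_fin, ← pow_mul] at count
  have hden : ∏ i ∈ range c, ((Fintype.card F : ℚ) ^ c - (Fintype.card F : ℚ) ^ i) ≠ 0 :=
    prod_ne_zero_iff.mpr fun i hi ↦ sub_ne_zero.mpr
      (pow_lt_pow_right₀ (by exact_mod_cast hq) (mem_range.mp hi)).ne'
  have countQ := congrArg (Nat.cast : ℕ → ℚ) count
  push_cast only [Nat.cast_mul, Nat.cast_pow] at countQ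
  rw [Nat.cast_prod_pow_sub_pow (by omega) le_rfl, Nat.cast_prod_pow_sub_pow (by omega) hc]
    at countQ
  rw [← prod_range_pow_sub_pow_div_pow_sub_pow (by positivity) hc, prod_div_distrib,
    mul_div_assoc', eq_div_iff hden, countQ, mul_comm]

end FiniteDimensional

section Quotient

variable {F V : Type*} [DivisionRing F] [AddCommGroup V] [Module F V] [FiniteDimensional F V]

theorem finrank_comap_mkQ (K : Submodule F V) (D' : Submodule F (V ⧸ K)) :
    finrank F (D'.comap K.mkQ) = finrank F D' + finrank F K := by
  have := LinearMap.finrank_range_add_finrank_ker (K.mkQ ∘ₗ (D'.comap K.mkQ).subtype)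
  rw [LinearMap.range_comp, range_subtype, map_comap_eq_of_surjective K.mkQ_surjective,
    LinearMap.ker_comp, ker_mkQ, (comapSubtypeEquivOfLe (K.le_comap_mkQ D')).finrank_eq] at this
  exact this.symm

theorem ncard_finrank_eq_le_disjoint_eq_ncard_quotient {K L : Submodule F V}
    (hKL : Disjoint K L) {c : ℕ} (hc : finrank F K ≤ c) :
    {D : Submodule F V | finrank F D = c ∧ K ≤ D ∧ Disjoint D L}.ncard =
      {D' : Submodule F (V ⧸ K) |
        finrank F D' = c - finrank F K ∧ Disjoint D' (L.map K.mkQ)}.ncard := by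
  have mem_iff (D' : Submodule F (V ⧸ K)) :
      (finrank F (D'.comap K.mkQ) = c ∧ K ≤ D'.comap K.mkQ ∧ Disjoint (D'.comap K.mkQ) L) ↔
        finrank F D' = c - finrank F K ∧ Disjoint D' (L.map K.mkQ) := by
    rw [finrank_comap_mkQ, disjoint_comap_mkQ_iff hKL]
    exact ⟨fun h ↦ ⟨by omega, h.2.2⟩, fun h ↦ ⟨by omega, K.le_comap_mkQ D', h.2⟩⟩
  rw [← Set.ncard_image_of_injective _ (comap_injective_of_surjective K.mkQ_surjective)]
  congr 1
  ext D
  refine ⟨fun hD ↦ ?_, ?_⟩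
  · obtain ⟨D', rfl⟩ : ∃ D' : Submodule F (V ⧸ K), D'.comap K.mkQ = D :=
      ⟨D.map K.mkQ, by rw [comap_map_mkQ, sup_eq_right.mpr hD.2.1]⟩
    exact ⟨D', (mem_iff D').mp hD, rfl⟩
  · rintro ⟨D', hD', rfl⟩
    exact (mem_iff D').mpr hD'

end Quotient

end Submodule

theorem stmt11_general {F W : Type*} [Field F] [Fintype F] [AddCommGroup W] [Module F W]
    [FiniteDimensional F W] {q N a b c : ℕ}
    (hq : Fintype.card F = q) (hW : Module.finrank F W = N)
    (K L : Submodule F W) (hKL : K ⊓ L = ⊥)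
    (hK : Module.finrank F K = a) (hL : Module.finrank F L = b)
    (hac : a ≤ c) (hcb : c ≤ N - b) :
    ({D : Submodule F W | Module.finrank F D = c ∧ K ≤ D ∧ D ⊓ L = ⊥}.ncard : ℚ) =
      (q : ℚ) ^ (b * (c - a)) *
        ∏ i ∈ Finset.Icc 1 (c - a),
          ((q : ℚ) ^ (N - a - b + 1 - i) - 1) / ((q : ℚ) ^ i - 1) := by
  have hKL' : Disjoint K L := disjoint_iff.mpr hKL
  have hLmap : finrank F (L.map K.mkQ) = b := by
    rw [finrank_map_of_disjoint_ker _ (by simpa using hKL'.symm), hL]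
  have hquot : finrank F ((W ⧸ K) ⧸ L.map K.mkQ) = N - a - b := by
    rw [finrank_quotient, finrank_quotient, hW, hK, hLmap]
  simp only [← disjoint_iff]
  rw [ncard_finrank_eq_le_disjoint_eq_ncard_quotient hKL' (hK ▸ hac),
    ncard_finrank_eq_disjoint _ (by omega), hquot, hLmap, hK, hq]

theorem stmt11 {F W : Type*} [Field F] [Fintype F] [AddCommGroup W] [Module F W]
    [FiniteDimensional F W] {q N a b c : ℕ}
    (hq : Fintype.card F = q) (hN : 0 < N) (hW : Module.finrank F W = N)
    (K L : Submodule F W) (hKL : K ⊓ L = ⊥)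
    (hK : Module.finrank F K = a) (hL : Module.finrank F L = b)
    (hac : a ≤ c) (hcb : c ≤ N - b) :
    ({D : Submodule F W | Module.finrank F D = c ∧ K ≤ D ∧ D ⊓ L = ⊥}.ncard : ℚ) =
      (q : ℚ) ^ (b * (c - a)) *
        ∏ i ∈ Finset.Icc 1 (c - a),
          ((q : ℚ) ^ (N - a - b + 1 - i) - 1) / ((q : ℚ) ^ i - 1) :=
  stmt11_general hq hW K L hKL hK hL hac hcb
end

section
/- Let n ≥ 5 and let 𝓔 be a set of 3-dimensional linear subspaces of W such that dim(E ∩ E') = 2 for any two distinct E, E' ∈ 𝓔 (in projective terms: any two distinct planes of 𝓔 meet in a line). Then |𝓔| ≤ (q^{n−1} − 1)/(q − 1) = 1 + q + q^2 + ⋯ + q^{n−2}. -/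
/-!
Two distinct planes `E₁, E₂` of the family meet in a line `L` and span a solid `S`. A plane not
through `L` meets `E₁` and `E₂` in two distinct lines, so it lies in `S`; if some plane misses
`L`, a plane through `L` meets it in a second line and lies in `S` as well. Hence either all
planes pass through `L`, and they are points of `W ⧸ L` of dimension `n - 1`, or all lie in `S`,
and they are hyperplanes of `S`, i.e. points of its 4-dimensional dual; as `n ≥ 5` both counts
are at most `1 + q + ⋯ + q ^ (n - 2)`.
-/

open Module Submodule Finset

section

variable {F V : Type*} [Field F] [AddCommGroup V] [Module F V]

theorem ncard_le_sum_pow_of_injOn [Finite F] [FiniteDimensional F V] {α : Type*}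
    {s : Set α} (f : α → Submodule F V) (hf : ∀ a ∈ s, finrank F (f a) = 1)
    (hinj : Set.InjOn f s) :
    s.ncard ≤ ∑ i ∈ range (finrank F V), Nat.card F ^ i := by
  have : Finite (Projectivization F V) :=
    (Projectivization.finite_iff_of_finite F V).mpr (Module.finite_of_finite F)
  have hlines : {p : Submodule F V | finrank F p = 1}.ncard =
      ∑ i ∈ range (finrank F V), Nat.card F ^ i :=
    (Nat.card_congr (Projectivization.equivSubmodule F V)).symm.trans
      (Projectivization.card_of_finrank F V rfl)
  rw [← hlines]
  exact Set.ncard_le_ncard_of_injOn f hf hinj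
    (Set.finite_coe_iff.mp (Finite.of_equiv _ (Projectivization.equivSubmodule F V)))

theorem finrank_map_mkQ_add_finrank {L A : Submodule F V} [FiniteDimensional F A] (hLA : L ≤ A) :
    finrank F (A.map L.mkQ) + finrank F L = finrank F A := by
  have hnullity := (L.mkQ.domRestrict A).finrank_range_add_finrank_ker
  rwa [LinearMap.range_domRestrict, LinearMap.ker_domRestrict, ker_mkQ,
    ← finrank_map_subtype_eq, map_comap_subtype, inf_eq_right.mpr hLA] at hnullity

theorem ncard_le_sum_pow_of_forall_ge_of_finrank_eq_add_one [Finite F] [FiniteDimensional F V]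
    {L : Submodule F V} {E : Set (Submodule F V)} (hLE : ∀ A ∈ E, L ≤ A)
    (hE : ∀ A ∈ E, finrank F A = finrank F L + 1) :
    E.ncard ≤ ∑ i ∈ range (finrank F V - finrank F L), Nat.card F ^ i := by
  rw [← L.finrank_quotient_add_finrank, Nat.add_sub_cancel]
  refine ncard_le_sum_pow_of_injOn (fun A => A.map L.mkQ) (fun A hA => ?_) fun A hA B hB hAB => ?_
  · have hquot := finrank_map_mkQ_add_finrank (hLE A hA)
    have hA' := hE A hA
    omega
  · have hcomap := congr_arg (comap L.mkQ) hAB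
    simpa only [comap_map_mkQ, sup_eq_right.mpr (hLE A hA), sup_eq_right.mpr (hLE B hB)]
      using hcomap

theorem ncard_le_sum_pow_of_forall_le_of_finrank_add_one_eq [Finite F] {S : Submodule F V}
    [FiniteDimensional F S] {E : Set (Submodule F V)} (hES : ∀ A ∈ E, A ≤ S)
    (hE : ∀ A ∈ E, finrank F A + 1 = finrank F S) :
    E.ncard ≤ ∑ i ∈ range (finrank F S), Nat.card F ^ i := by
  rw [← Subspace.dual_finrank_eq]
  refine ncard_le_sum_pow_of_injOn (fun A => (A.comap S.subtype).dualAnnihilator)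
    (fun A hA => ?_) fun A hA B hB hAB => ?_
  · have hann := Subspace.finrank_add_finrank_dualAnnihilator_eq (A.comap S.subtype)
    rw [← finrank_map_subtype_eq, map_comap_subtype, inf_eq_right.mpr (hES A hA)] at hann
    have hA' := hE A hA
    omega
  · have hmap := congr_arg (map S.subtype) (Subspace.dualAnnihilator_inj.mp hAB)
    simpa only [map_comap_subtype, inf_eq_right.mpr (hES A hA), inf_eq_right.mpr (hES B hB)]
      using hmap

theorem sup_eq_of_finrank_eq [FiniteDimensional F V] {A M₁ M₂ : Submodule F V} {d : ℕ}
    (h₁ : M₁ ≤ A) (h₂ : M₂ ≤ A) (hne : M₁ ≠ M₂) (hM₁ : finrank F M₁ = d)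
    (hM₂ : finrank F M₂ = d) (hA : finrank F A = d + 1) : M₁ ⊔ M₂ = A := by
  refine eq_of_le_of_finrank_le (sup_le h₁ h₂) ?_
  have hlt : M₁ < M₁ ⊔ M₂ := by
    refine lt_of_le_of_ne le_sup_left fun h => hne ?_
    have h₂₁ : M₂ ≤ M₁ := le_sup_right.trans h.ge
    exact (eq_of_le_of_finrank_le h₂₁ (hM₁.trans hM₂.symm).le).symm
  have hrank := finrank_lt_finrank_of_lt hlt
  omega

theorem forall_inf_le_or_forall_le_sup [FiniteDimensional F V] {E : Set (Submodule F V)} {d : ℕ}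
    (hdim : ∀ A ∈ E, finrank F A = d + 1)
    (hmeet : ∀ A ∈ E, ∀ B ∈ E, A ≠ B → finrank F ↥(A ⊓ B) = d)
    {E₁ E₂ : Submodule F V} (hE₁ : E₁ ∈ E) (hE₂ : E₂ ∈ E) (hne : E₁ ≠ E₂) :
    (∀ A ∈ E, E₁ ⊓ E₂ ≤ A) ∨ ∀ A ∈ E, A ≤ E₁ ⊔ E₂ := by
  refine or_iff_not_imp_left.mpr fun h => ?_
  push Not at h
  obtain ⟨E₃, hE₃, hLE₃⟩ := h
  have hL := hmeet E₁ hE₁ E₂ hE₂ hne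
  have le_sup_of_not_inf_le : ∀ A ∈ E, ¬ E₁ ⊓ E₂ ≤ A → A ≤ E₁ ⊔ E₂ := by
    intro A hA hLA
    have hA₁ : A ≠ E₁ := by rintro rfl; exact hLA inf_le_left
    have hA₂ : A ≠ E₂ := by rintro rfl; exact hLA inf_le_right
    have hne' : A ⊓ E₁ ≠ A ⊓ E₂ := by
      intro h
      have hL' : A ⊓ E₁ = E₁ ⊓ E₂ :=
        eq_of_le_of_finrank_le (le_inf inf_le_right (h ▸ inf_le_right))
          (by rw [hL, hmeet A hA E₁ hE₁ hA₁])
      exact hLA (hL' ▸ inf_le_left)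
    rw [← sup_eq_of_finrank_eq inf_le_left inf_le_left hne' (hmeet A hA E₁ hE₁ hA₁)
      (hmeet A hA E₂ hE₂ hA₂) (hdim A hA)]
    exact sup_le_sup inf_le_right inf_le_right
  intro A hA
  by_cases hLA : E₁ ⊓ E₂ ≤ A
  · have hA₃ : A ≠ E₃ := by rintro rfl; exact hLE₃ hLA
    have hne' : E₁ ⊓ E₂ ≠ A ⊓ E₃ := fun h => hLE₃ (h ▸ inf_le_right)
    rw [← sup_eq_of_finrank_eq hLA inf_le_left hne' hL (hmeet A hA E₃ hE₃ hA₃) (hdim A hA)]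
    exact sup_le inf_le_sup (inf_le_right.trans (le_sup_of_not_inf_le E₃ hE₃ hLE₃))
  · exact le_sup_of_not_inf_le A hA hLA

end

theorem stmt12 {F W : Type*} [Field F] [Fintype F] [AddCommGroup W] [Module F W]
    [FiniteDimensional F W] {q n : ℕ}
    (hq : Fintype.card F = q) (hn : 5 ≤ n) (hW : Module.finrank F W = n + 1)
    (E : Set (Submodule F W))
    (hplanes : ∀ E₁ ∈ E, Module.finrank F E₁ = 3)
    (hmeet : ∀ E₁ ∈ E, ∀ E₂ ∈ E, E₁ ≠ E₂ → Module.finrank F ↥(E₁ ⊓ E₂) = 2) :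
    E.ncard ≤ ∑ i ∈ Finset.range (n - 1), q ^ i := by
  rw [← hq, ← Nat.card_eq_fintype_card]
  by_cases hsmall : E.Subsingleton
  · calc E.ncard ≤ 1 := (Set.ncard_le_one hsmall.finite).mpr hsmall
      _ ≤ ∑ i ∈ range (n - 1), Nat.card F ^ i :=
        single_le_sum (f := (Nat.card F ^ ·)) (fun _ _ => Nat.zero_le _)
          (mem_range.mpr (by omega : 0 < n - 1))
  obtain ⟨E₁, hE₁, E₂, hE₂, hne⟩ := Set.not_subsingleton_iff.mp hsmall
  have hL : finrank F ↥(E₁ ⊓ E₂) = 2 := hmeet E₁ hE₁ E₂ hE₂ hne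
  have hS : finrank F ↥(E₁ ⊔ E₂) = 4 := by
    have hsum := finrank_sup_add_finrank_inf_eq E₁ E₂
    rw [hplanes E₁ hE₁, hplanes E₂ hE₂, hL] at hsum
    omega
  rcases forall_inf_le_or_forall_le_sup hplanes hmeet hE₁ hE₂ hne with hcommon | hspan
  · have hbound :=
      ncard_le_sum_pow_of_forall_ge_of_finrank_eq_add_one hcommon (by rw [hL]; exact hplanes)
    rwa [hW, hL] at hbound
  · calc E.ncard ≤ ∑ i ∈ range 4, Nat.card F ^ i :=
          hS ▸ ncard_le_sum_pow_of_forall_le_of_finrank_add_one_eq hspan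
            (fun A hA => by rw [hplanes A hA, hS])
      _ ≤ _ := sum_le_sum_of_subset (range_subset_range.mpr (by omega))
end

section
/- Let C be an independent set of plane-solid flags of PG(6,q), let ξ be a natural number such that every solid of PG(6,q) occurs in at most ξ flags of C, and let (E,S) ∈ C. Then the number of flags (E',S') ∈ C with E' ∩ E = 0 and S' ∩ E ≠ 0 is at most (q^8 + 2q^7 + 4q^6 + 5q^5 + 6q^4 + 5q^3 + 4q^2 + 2q + 1)·ξ. -/
variable {F V : Type*} [Field F] [AddCommGroup V] [Module F V]

/-!
If `(E', S') ∈ C` has `E' ∩ E = 0` and `S' ∩ E ≠ 0`, then `S' ∩ E` is a point `P` of `E`, because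
the plane `E'` of the solid `S'` misses `E`. Two such flags with distinct solids through the same
`P` are not in general position, and since their planes miss `E` this forces the two solids to
meet outside `E`. Hence, modulo `P`, their solids become pairwise meeting planes of
`V ⧸ P ≅ PG(5,q)`, and by the Erdős–Ko–Rado theorem for planes of `PG(5,q)` there are at most
`[5 choose 2]_q = q⁶ + q⁵ + 2q⁴ + 2q³ + 2q² + q + 1` of them. That theorem is proved by Katona's
averaging: an intersecting family meets every image under `GL(6,q)` of a Desarguesian plane
spread (the `q³ + 1` one-dimensional `𝔽_{q³}`-subspaces of `𝔽_{q³}²`, read over `𝔽_q`) in at most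
one plane. Summing over the `q² + q + 1` points of `E` and the at most `ξ` flags per solid gives
the bound.
-/

open Module Finset MulAction
open scoped Pointwise

namespace MulAction

variable {G X : Type*} [Group G] [MulAction G X]

theorem card_filter_smul_eq_of_mem_orbit [Fintype G] [DecidableEq X] {b x a : X}
    (hx : x ∈ orbit G b) (ha : a ∈ orbit G b) :
    #{g : G | g • x = a} = Nat.card (stabilizer G b) := by
  obtain ⟨h₁, rfl⟩ := hx
  obtain ⟨h₂, rfl⟩ := ha
  rw [← Fintype.card_subtype, ← Nat.card_eq_fintype_card]
  refine Nat.card_congr (Equiv.subtypeEquiv ((Equiv.mulLeft h₂⁻¹).trans (Equiv.mulRight h₁))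
    fun g => ?_)
  simp [mem_stabilizer_iff, mul_smul, inv_smul_eq_iff]

theorem card_mul_card_le_card_orbit [Fintype G] [DecidableEq X] {b : X} {𝓕 𝓢 : Finset X}
    (h𝓕 : ∀ A ∈ 𝓕, A ∈ orbit G b) (h𝓢 : ∀ S ∈ 𝓢, S ∈ orbit G b)
    (hmeet : ∀ g : G, ∀ S ∈ 𝓢, ∀ T ∈ 𝓢, g • S ∈ 𝓕 → g • T ∈ 𝓕 → S = T) :
    #𝓕 * #𝓢 ≤ Nat.card (orbit G b) := by
  classical
  let s := Nat.card (stabilizer G b)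
  have hs : 0 < s := Nat.card_pos
  have hfiber : ∀ S ∈ 𝓢, #{g : G | g • S ∈ 𝓕} = #𝓕 * s := by
    intro S hS
    rw [card_eq_sum_card_fiberwise (f := (· • S)) (s := {g : G | g • S ∈ 𝓕}) (t := 𝓕)
      fun g hg => (mem_filter.1 hg).2, ← smul_eq_mul, ← sum_const]
    refine sum_congr rfl fun A hA => ?_
    rw [filter_filter]
    refine (congrArg card (filter_congr fun g _ => ?_)).trans
      (card_filter_smul_eq_of_mem_orbit (h𝓢 S hS) (h𝓕 A hA))
    exact ⟨And.right, fun h => ⟨h ▸ hA, h⟩⟩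
  have hdisj : (𝓢 : Set X).PairwiseDisjoint fun S => ({g : G | g • S ∈ 𝓕} : Finset G) := by
    intro S hS T hT hST
    simp only [Function.onFun, disjoint_left, mem_filter, mem_univ, true_and]
    exact fun g hgS hgT => hST (hmeet g S hS T hT hgS hgT)
  refine Nat.le_of_mul_le_mul_right ?_ hs
  calc #𝓕 * #𝓢 * s = ∑ S ∈ 𝓢, #{g : G | g • S ∈ 𝓕} := by
        rw [sum_congr rfl hfiber, sum_const, smul_eq_mul]; ring
    _ = #(𝓢.biUnion fun S => ({g : G | g • S ∈ 𝓕} : Finset G)) := (card_biUnion hdisj).symm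
    _ ≤ Fintype.card G := card_le_univ _
    _ = Nat.card (orbit G b) * s := by
        rw [← Nat.card_eq_fintype_card, ← (stabilizer G b).index_mul_card, index_stabilizer,
          Nat.card_coe_set_eq]

end MulAction

theorem Set.ncard_le_mul_ncard_of_mapsTo {α β : Type*} {s : Set α} {t : Set β} {f : α → β}
    (hf : Set.MapsTo f s t) (ht : t.Finite) {n : ℕ}
    (hn : ∀ b ∈ t, {a ∈ s | f a = b}.ncard ≤ n) : s.ncard ≤ n * t.ncard := by
  have hs : s = ⋃ b ∈ ht.toFinset, {a ∈ s | f a = b} := by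
    ext a
    simp only [Set.mem_iUnion, Set.Finite.mem_toFinset, Set.mem_ofPred_eq, exists_prop]
    exact ⟨fun ha => ⟨f a, hf ha, ha, rfl⟩, fun ⟨_, _, ha, _⟩ => ha⟩
  calc s.ncard ≤ ∑ b ∈ ht.toFinset, {a ∈ s | f a = b}.ncard :=
        (congrArg Set.ncard hs).trans_le (Finset.set_ncard_biUnion_le _ _)
    _ ≤ ∑ _b ∈ ht.toFinset, n := sum_le_sum fun b hb => hn b (ht.mem_toFinset.1 hb)
    _ = n * t.ncard := by rw [sum_const, smul_eq_mul, mul_comm, Set.ncard_eq_toFinset_card t ht]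

theorem Submodule.span_range_eq_of_linearIndependent [FiniteDimensional F V] {k : ℕ}
    {A : Submodule F V} (hA : finrank F A = k) {s : Fin k → V} (hs : LinearIndependent F s)
    (hsA : ∀ i, s i ∈ A) : Submodule.span F (Set.range s) = A := by
  refine Submodule.eq_of_le_of_finrank_eq ?_ ?_
  · rw [Submodule.span_le]
    rintro _ ⟨i, rfl⟩
    exact hsA i
  · rw [finrank_span_eq_card hs, Fintype.card_fin, hA]

def linearIndependentSpanEquiv [FiniteDimensional F V] {k : ℕ} {A : Submodule F V}
    (hA : finrank F A = k) :
    {s : Fin k → V // LinearIndependent F s ∧ Submodule.span F (Set.range s) = A} ≃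
      {t : Fin k → A // LinearIndependent F t} where
  toFun s := ⟨fun i => ⟨s.1 i, s.2.2.le (Submodule.subset_span ⟨i, rfl⟩)⟩,
    LinearIndependent.of_comp A.subtype s.2.1⟩
  invFun t := ⟨A.subtype ∘ t.1, t.2.map' A.subtype A.ker_subtype,
    Submodule.span_range_eq_of_linearIndependent hA (t.2.map' A.subtype A.ker_subtype)
      fun i => (t.1 i).2⟩
  left_inv _ := rfl
  right_inv _ := rfl

theorem card_finrank_eq_mul_prod [Fintype F] [FiniteDimensional F V] {k : ℕ}
    (hk : k ≤ finrank F V) :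
    Nat.card {A : Submodule F V // finrank F A = k} *
        ∏ i : Fin k, (Fintype.card F ^ k - Fintype.card F ^ (i : ℕ)) =
      ∏ i : Fin k, (Fintype.card F ^ finrank F V - Fintype.card F ^ (i : ℕ)) := by
  classical
  have : Finite V := Module.finite_of_finite F
  have : Fintype {A : Submodule F V // finrank F A = k} := .ofFinite _
  let span : {s : Fin k → V // LinearIndependent F s} → {A : Submodule F V // finrank F A = k} :=
    fun s => ⟨Submodule.span F (Set.range s.1), by rw [finrank_span_eq_card s.2, Fintype.card_fin]⟩
  have hfiber (A : {A : Submodule F V // finrank F A = k}) :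
      Nat.card {s // span s = A} =
        ∏ i : Fin k, (Fintype.card F ^ k - Fintype.card F ^ (i : ℕ)) := by
    have hA := card_linearIndependent (K := F) (V := A) A.2.ge
    rw [A.2] at hA
    rw [← hA, ← Nat.card_congr (linearIndependentSpanEquiv A.2)]
    exact Nat.card_congr ((Equiv.subtypeEquivRight fun s => Subtype.ext_iff).trans
      (Equiv.subtypeSubtypeEquivSubtypeInter _ fun s => Submodule.span F (Set.range s) = A.1))
  rw [← card_linearIndependent hk, ← Nat.card_congr (Equiv.sigmaFiberEquiv span), Nat.card_sigma]
  simp [hfiber, Nat.card_eq_fintype_card]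

theorem Submodule.disjoint_of_finrank_eq_one [FiniteDimensional F V] {A B : Submodule F V}
    (hA : finrank F A = 1) (hB : finrank F B = 1) (hAB : A ≠ B) : Disjoint A B := by
  rw [disjoint_iff]
  by_contra hne
  have hpos : 1 ≤ finrank F ↥(A ⊓ B) := Submodule.one_le_finrank_iff.2 hne
  have hleA := Submodule.finrank_mono (inf_le_left : A ⊓ B ≤ A)
  have hleB := Submodule.finrank_mono (inf_le_right : A ⊓ B ≤ B)
  apply hAB
  rw [← Submodule.eq_of_le_of_finrank_eq inf_le_left (by omega : finrank F ↥(A ⊓ B) = finrank F A),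
    Submodule.eq_of_le_of_finrank_eq inf_le_right (by omega : finrank F ↥(A ⊓ B) = finrank F B)]

theorem card_finrank_eq_one [Fintype F] [FiniteDimensional F V] (hV : 0 < finrank F V) :
    Nat.card {A : Submodule F V // finrank F A = 1} =
      ∑ i ∈ range (finrank F V), Fintype.card F ^ i := by
  have hq : 1 < Fintype.card F := Fintype.one_lt_card
  have h := card_finrank_eq_mul_prod (F := F) (V := V) (k := 1) hV
  simp only [Fin.prod_univ_one, Fin.val_zero, pow_one, pow_zero] at h
  refine Nat.eq_of_mul_eq_mul_right (Nat.sub_pos_of_lt hq) ?_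
  rw [h, geom_sum_mul_of_one_le hq.le]

theorem exists_spread [Fintype F] [FiniteDimensional F V] {n : ℕ} (hn : n ≠ 0)
    (hV : finrank F V = 2 * n) :
    ∃ 𝓢 : Finset (Submodule F V), #𝓢 = Fintype.card F ^ n + 1 ∧
      (∀ S ∈ 𝓢, finrank F S = n) ∧ (𝓢 : Set (Submodule F V)).Pairwise Disjoint := by
  classical
  obtain ⟨p, _⟩ := CharP.exists F
  have : Fact p.Prime := ⟨CharP.char_is_prime F p⟩
  have : NeZero n := ⟨hn⟩
  let K := FiniteField.Extension F p n
  have hK : finrank F K = n := FiniteField.finrank_extension F p n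
  have : Fintype K := .ofFinite K
  have : Fintype {L : Submodule K (K × K) // finrank K L = 1} := .ofFinite _
  let e : (K × K) ≃ₗ[F] V := LinearEquiv.ofFinrankEq _ _ (by rw [finrank_prod, hK, hV]; ring)
  let σ : Submodule K (K × K) → Submodule F V :=
    fun L => (L.restrictScalars F).map (e : (K × K) →ₗ[F] V)
  have hσ : Function.Injective σ :=
    (Submodule.map_injective_of_injective e.injective).comp (Submodule.restrictScalars_injective ..)
  refine ⟨univ.image (σ ∘ Subtype.val : {L : Submodule K (K × K) // finrank K L = 1} → _),
    ?_, ?_, ?_⟩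
  · rw [card_image_of_injective _ (hσ.comp Subtype.val_injective), card_univ,
      ← Nat.card_eq_fintype_card, card_finrank_eq_one (by simp), finrank_prod, finrank_self,
      ← Nat.card_eq_fintype_card, FiniteField.natCard_extension, Nat.card_eq_fintype_card]
    simp [sum_range_succ, add_comm]
  · simp only [mem_image, mem_univ, true_and, forall_exists_index]
    rintro _ L rfl
    rw [Function.comp_apply, LinearEquiv.finrank_map_eq, ← Module.finrank_mul_finrank F K, hK,
      (Submodule.restrictScalarsEquiv F K _ L.1).finrank_eq, L.2, mul_one]
  · simp only [coe_image, coe_univ, Set.image_univ]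
    rintro _ ⟨L, rfl⟩ _ ⟨L', rfl⟩ hne
    have hLL' := Submodule.disjoint_of_finrank_eq_one L.2 L'.2
      fun h => hne (congrArg σ h)
    refine Submodule.disjoint_map e.injective ?_
    rw [disjoint_iff, ← Submodule.restrictScalars_inf, disjoint_iff.1 hLL',
      Submodule.restrictScalars_bot]

theorem Submodule.mem_orbit_linearEquiv_iff [FiniteDimensional F V] {A B : Submodule F V} :
    B ∈ orbit (V ≃ₗ[F] V) A ↔ finrank F B = finrank F A := by
  constructor
  · rintro ⟨g, rfl⟩
    exact LinearEquiv.finrank_map_eq g A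
  · intro h
    obtain ⟨g, hg⟩ :=
      Submodule.exists_linearEquiv_restrict_eq (LinearEquiv.ofFinrankEq A B h.symm)
    refine ⟨g, Submodule.eq_of_le_of_finrank_eq ?_ ((LinearEquiv.finrank_map_eq g A).trans h.symm)⟩
    rintro _ ⟨x, hx, rfl⟩
    change g x ∈ B
    rw [← hg ⟨x, hx⟩]
    exact Submodule.coe_mem _

/-- The Erdős–Ko–Rado bound for `n`-spaces of a `2n`-space by averaging over the
images of a spread under `GL(V)`. -/
theorem ncard_mul_le_card_finrank_eq_of_pairwise_not_disjoint [Fintype F]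
    [FiniteDimensional F V] {n : ℕ} (hn : n ≠ 0) (hV : finrank F V = 2 * n)
    {𝓕 : Set (Submodule F V)}
    (hdim : ∀ A ∈ 𝓕, finrank F A = n) (hint : 𝓕.Pairwise fun A B => ¬ Disjoint A B) :
    𝓕.ncard * (Fintype.card F ^ n + 1) ≤ Nat.card {A : Submodule F V // finrank F A = n} := by
  classical
  have : Finite V := Module.finite_of_finite F
  have : Finite (V ≃ₗ[F] V) := .of_injective _ DFunLike.coe_injective
  have : Fintype (V ≃ₗ[F] V) := .ofFinite _
  obtain ⟨𝓢, h𝓢card, h𝓢dim, h𝓢disj⟩ := exists_spread hn hV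
  obtain ⟨b, hb⟩ : 𝓢.Nonempty := card_pos.1 (by omega)
  have horbit (A : Submodule F V) : A ∈ orbit (V ≃ₗ[F] V) b ↔ finrank F A = n := by
    rw [Submodule.mem_orbit_linearEquiv_iff, h𝓢dim b hb]
  have hmeet (g : V ≃ₗ[F] V) (S) (hS : S ∈ 𝓢) (T) (hT : T ∈ 𝓢)
      (hgS : g • S ∈ (Set.toFinite 𝓕).toFinset) (hgT : g • T ∈ (Set.toFinite 𝓕).toFinset) :
      S = T := by
    rw [Set.Finite.mem_toFinset] at hgS hgT
    by_contra hST
    exact hint hgS hgT ((MulAction.injective g).ne hST)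
      (Submodule.disjoint_map g.injective (h𝓢disj hS hT hST))
  have := card_mul_card_le_card_orbit (G := V ≃ₗ[F] V)
    (fun A hA => (horbit A).2 (hdim A ((Set.toFinite 𝓕).mem_toFinset.1 hA)))
    (fun S hS => (horbit S).2 (h𝓢dim S hS)) hmeet
  rw [← Set.ncard_eq_toFinset_card, h𝓢card] at this
  exact this.trans_eq (Nat.card_congr (Equiv.subtypeEquivRight horbit))

theorem card_finrank_eq_three_of_finrank_eq_six [Fintype F] [FiniteDimensional F V]
    (hV : finrank F V = 6) :
    Nat.card {A : Submodule F V // finrank F A = 3} =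
      (Fintype.card F ^ 3 + 1) * (Fintype.card F ^ 6 + Fintype.card F ^ 5 +
        2 * Fintype.card F ^ 4 + 2 * Fintype.card F ^ 3 + 2 * Fintype.card F ^ 2 +
        Fintype.card F + 1) := by
  have h := card_finrank_eq_mul_prod (F := F) (V := V) (k := 3) (by omega)
  set q := Fintype.card F
  have hq : 1 < q := Fintype.one_lt_card
  have hpos : 0 < ∏ i : Fin 3, (q ^ 3 - q ^ (i : ℕ)) :=
    prod_pos fun i _ => Nat.sub_pos_of_lt (Nat.pow_lt_pow_right hq i.2)
  refine Nat.eq_of_mul_eq_mul_right hpos (h.trans ?_)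
  have h3 : q ^ 2 ≤ q ^ 3 := Nat.pow_le_pow_right hq.le (by norm_num)
  have h6 : q ^ 2 ≤ q ^ 6 := Nat.pow_le_pow_right hq.le (by norm_num)
  have h1 : q ≤ q ^ 2 := Nat.le_self_pow (by norm_num) q
  have h0 : 1 ≤ q := hq.le
  simp only [hV, Fin.prod_univ_three, Fin.val_zero, Fin.val_one, Fin.val_two, pow_zero, pow_one]
  zify [h0, h1.trans h3, h1.trans h6, h3, h6, h0.trans (h1.trans h3), h0.trans (h1.trans h6)]
  ring

theorem ncard_planes_le_of_pairwise_not_disjoint [Fintype F] [FiniteDimensional F V]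
    (hV : finrank F V = 6) {𝓕 : Set (Submodule F V)} (hdim : ∀ A ∈ 𝓕, finrank F A = 3)
    (hint : 𝓕.Pairwise fun A B => ¬ Disjoint A B) :
    𝓕.ncard ≤ Fintype.card F ^ 6 + Fintype.card F ^ 5 + 2 * Fintype.card F ^ 4 +
      2 * Fintype.card F ^ 3 + 2 * Fintype.card F ^ 2 + Fintype.card F + 1 := by
  have h :=
    ncard_mul_le_card_finrank_eq_of_pairwise_not_disjoint three_ne_zero (by rw [hV]) hdim hint
  rw [card_finrank_eq_three_of_finrank_eq_six hV, mul_comm] at h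
  exact Nat.le_of_mul_le_mul_left h (by positivity)

theorem Submodule.map_mkQ_inf_map_mkQ_ne_bot {P S T : Submodule F V} (hS : P ≤ S) (hT : P ≤ T)
    (h : ¬ S ⊓ T ≤ P) : S.map P.mkQ ⊓ T.map P.mkQ ≠ ⊥ := by
  intro hbot
  apply h
  have := congrArg (Submodule.comap P.mkQ) hbot
  rw [Submodule.comap_inf, Submodule.comap_map_mkQ, Submodule.comap_map_mkQ, sup_eq_right.2 hS,
    sup_eq_right.2 hT, Submodule.comap_bot, Submodule.ker_mkQ] at this
  exact this.le

theorem Submodule.finrank_map_mkQ_add_finrank [FiniteDimensional F V] {P S : Submodule F V}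
    (hPS : P ≤ S) : finrank F (S.map P.mkQ) + finrank F P = finrank F S := by
  have h := LinearMap.finrank_range_add_finrank_ker (P.mkQ ∘ₗ S.subtype)
  rwa [LinearMap.range_comp, Submodule.range_subtype, LinearMap.ker_comp, Submodule.ker_mkQ,
    (Submodule.comapSubtypeEquivOfLe hPS).finrank_eq] at h

theorem ncard_le_of_pairwise_not_inf_le [Fintype F] [FiniteDimensional F V]
    (hV : finrank F V = 7) {P : Submodule F V} (hP : finrank F P = 1) {𝓖 : Set (Submodule F V)}
    (hdim : ∀ S ∈ 𝓖, finrank F S = 4) (hP𝓖 : ∀ S ∈ 𝓖, P ≤ S)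
    (h𝓖 : 𝓖.Pairwise fun S T => ¬ S ⊓ T ≤ P) :
    𝓖.ncard ≤ Fintype.card F ^ 6 + Fintype.card F ^ 5 + 2 * Fintype.card F ^ 4 +
      2 * Fintype.card F ^ 3 + 2 * Fintype.card F ^ 2 + Fintype.card F + 1 := by
  have hinj : 𝓖.InjOn fun S => S.map P.mkQ := by
    intro S hS T hT hST
    rw [← sup_eq_right.2 (hP𝓖 S hS), ← sup_eq_right.2 (hP𝓖 T hT), ← Submodule.comap_map_mkQ,
      ← Submodule.comap_map_mkQ]
    exact congrArg _ hST
  rw [← hinj.ncard_image]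
  refine ncard_planes_le_of_pairwise_not_disjoint
    (by have := P.finrank_quotient_add_finrank; omega) ?_ ?_
  · rintro _ ⟨S, hS, rfl⟩
    have := Submodule.finrank_map_mkQ_add_finrank (hP𝓖 S hS)
    rw [hP, hdim S hS] at this
    exact Nat.add_right_cancel this
  · rintro _ ⟨S, hS, rfl⟩ _ ⟨T, hT, rfl⟩ hne
    exact fun hST => Submodule.map_mkQ_inf_map_mkQ_ne_bot (hP𝓖 S hS) (hP𝓖 T hT)
      (h𝓖 hS hT fun h => hne (h ▸ rfl)) hST.eq_bot

theorem not_inf_le_of_not_genPos {E : Submodule F V} {f g : Submodule F V × Submodule F V}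
    (hf : f.1 ≤ f.2) (hg : g.1 ≤ g.2) (hfE : f.1 ⊓ E = ⊥) (hgE : g.1 ⊓ E = ⊥)
    (hfg : ¬ GenPos f g) : ¬ f.2 ⊓ g.2 ≤ E := by
  have key {a b c : Submodule F V} (hab : a ≤ b) (haE : a ⊓ E = ⊥) (h : b ⊓ c ≤ E) :
      a ⊓ c = ⊥ :=
    eq_bot_iff.2 (haE ▸ le_inf inf_le_left ((inf_le_inf_right c hab).trans h))
  exact fun h => hfg ⟨key hf hfE h, key hg hgE (inf_comm f.2 g.2 ▸ h)⟩

theorem IsFlag.finrank_inf_eq_one {E : Submodule F V} {f : Submodule F V × Submodule F V}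
    (hf : IsFlag f) (hfE : f.1 ⊓ E = ⊥) (hSE : f.2 ⊓ E ≠ ⊥) : finrank F ↥(f.2 ⊓ E) = 1 := by
  obtain ⟨h3, h4, hle⟩ := hf
  have : FiniteDimensional F f.1 := Module.finite_of_finrank_eq_succ h3
  have : FiniteDimensional F f.2 := Module.finite_of_finrank_eq_succ h4
  have hsum := Submodule.finrank_sup_add_finrank_inf_eq f.1 (f.2 ⊓ E)
  rw [eq_bot_iff.2 ((inf_le_inf_left f.1 inf_le_right).trans hfE.le), finrank_bot] at hsum
  have hsup := Submodule.finrank_mono (sup_le hle inf_le_left : f.1 ⊔ f.2 ⊓ E ≤ f.2)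
  have hpos := Submodule.one_le_finrank_iff.2 hSE
  omega

theorem ncard_solids_le [Fintype F] [FiniteDimensional F V] (hV : finrank F V = 7)
    {C : Set (Submodule F V × Submodule F V)} (hC : IsIndep C) {E : Submodule F V}
    (hE : finrank F E = 3) :
    (Prod.snd '' {g ∈ C | g.1 ⊓ E = ⊥ ∧ g.2 ⊓ E ≠ ⊥}).ncard ≤
      (Fintype.card F ^ 6 + Fintype.card F ^ 5 + 2 * Fintype.card F ^ 4 +
        2 * Fintype.card F ^ 3 + 2 * Fintype.card F ^ 2 + Fintype.card F + 1) *
      (Fintype.card F ^ 2 + Fintype.card F + 1) := by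
  have : Finite V := Module.finite_of_finite F
  have hmaps : Set.MapsTo (fun S => S.comap E.subtype)
      (Prod.snd '' {g ∈ C | g.1 ⊓ E = ⊥ ∧ g.2 ⊓ E ≠ ⊥}) {A : Submodule F E | finrank F A = 1} := by
    rintro _ ⟨g, hg, rfl⟩
    change finrank F ↥(g.2.comap E.subtype) = 1
    rw [← Submodule.finrank_map_subtype_eq, Submodule.map_comap_subtype, inf_comm]
    exact (hC.1 g hg.1).finrank_inf_eq_one hg.2.1 hg.2.2
  have hpoints : {A : Submodule F E | finrank F A = 1}.ncard =
      Fintype.card F ^ 2 + Fintype.card F + 1 := by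
    rw [← Nat.card_coe_set_eq, Set.coe_ofPred, card_finrank_eq_one (by omega), hE]
    simp only [sum_range_succ, range_zero, sum_empty, pow_zero, pow_one]
    ring
  rw [← hpoints]
  refine Set.ncard_le_mul_ncard_of_mapsTo hmaps (Set.toFinite _) fun A hA => ?_
  refine ncard_le_of_pairwise_not_inf_le hV (P := A.map E.subtype)
    ((Submodule.finrank_map_subtype_eq E A).trans hA) ?_ ?_ ?_
  · rintro S ⟨⟨g, hg, rfl⟩, -⟩
    exact (hC.1 g hg.1).2.1
  · rintro S ⟨-, rfl⟩
    rw [Submodule.map_comap_subtype]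
    exact inf_le_right
  · rintro S ⟨⟨g, hg, rfl⟩, -⟩ T ⟨⟨g', hg', rfl⟩, -⟩ hne hle
    refine not_inf_le_of_not_genPos (hC.1 g hg.1).2.2 (hC.1 g' hg'.1).2.2 hg.2.1 hg'.2.1
      (hC.2 g hg.1 g' hg'.1 fun h => hne (h ▸ rfl)) (hle.trans ?_)
    exact Submodule.map_subtype_le E A

theorem stmt14 {q : ℕ} [Fintype F] [FiniteDimensional F V]
    (hq : Fintype.card F = q) (hV : Module.finrank F V = 7)
    (C : Set (Submodule F V × Submodule F V)) (hC : IsIndep C) (ξ : ℕ)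
    (hsolid : ∀ S : Submodule F V, {f ∈ C | f.2 = S}.ncard ≤ ξ)
    (E S : Submodule F V) (hES : (E, S) ∈ C) :
    {g ∈ C | g.1 ⊓ E = ⊥ ∧ g.2 ⊓ E ≠ ⊥}.ncard ≤
      (q ^ 8 + 2 * q ^ 7 + 4 * q ^ 6 + 5 * q ^ 5 + 6 * q ^ 4 + 5 * q ^ 3 +
        4 * q ^ 2 + 2 * q + 1) * ξ := by
  have : Finite V := Module.finite_of_finite F
  subst hq
  calc _ ≤ ξ * (Prod.snd '' {g ∈ C | g.1 ⊓ E = ⊥ ∧ g.2 ⊓ E ≠ ⊥}).ncard :=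
        Set.ncard_le_mul_ncard_of_mapsTo (Set.mapsTo_image _ _) (Set.toFinite _) fun S' _ =>
          (Set.ncard_le_ncard (t := {f ∈ C | f.2 = S'}) fun g hg => ⟨hg.1.1, hg.2⟩).trans
            (hsolid S')
    _ ≤ ξ * _ := Nat.mul_le_mul_left ξ (ncard_solids_le hV hC (hC.1 _ hES).1)
    _ = _ := by ring
end

section
/- Let P₁ and P₂ be distinct points of PG(6,q) and let E₁, E₂, E₃ be planes such that for all distinct i, j ∈ {1,2,3} one has Eᵢ ∩ Eⱼ = P₁ and P₂ ⊄ Eᵢ + Eⱼ. Then the number of solids S with P₂ ⊆ S and S ∩ Eᵢ ≠ 0 for all i ∈ {1,2,3} is at most 3q^6 + 6q^5 + 7q^4 + 4q^3 + 2q^2 + q + 1. -/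
variable {F V : Type*} [Field F] [AddCommGroup V] [Module F V]

/-!
Split the solids `S` through `P₂` meeting every `E i` by how they meet the configuration.
If `P₁ ∈ S`, then `S` contains the line `P₁P₂`, and `PG(6,q)` has `[5 choose 2]_q` solids through
a line. Otherwise the contacts `S ∩ E i` pairwise meet trivially and together with `P₂` span a
subspace of `S` of dimension `dim (S ∩ E i) + dim (S ∩ E j) + 1`. So either some contact is a line
`ℓ`, and then `S = ℓ + Q + P₂` for a point `Q` of another `E j`; or all contacts are points `Qᵢ`.
In the latter case either `S = Q₀ + Q₁ + Q₂ + P₂`, or `Q₂` lies in the plane `T = Q₀ + Q₁ + P₂`.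
Such planes `T` are few, and over each of them a solid `S` meeting every `E i` only inside `T` is
spanned by `T` and a vector outside the three 4-spaces `T + E i`, which pairwise meet in `T + P₁`.
-/

open Module Submodule Set

namespace Set

variable {α β : Type*}

private theorem ncard_coe_inter_preimage_singleton [DecidableEq β] (s : Finset α) (f : α → β)
    (b : β) : ((s : Set α) ∩ f ⁻¹' {b}).ncard = (s.filter (f · = b)).card := by
  rw [← ncard_coe_finset]
  congr 1
  ext
  simp

theorem ncard_le_mul_ncard_of_mapsTo_s15 {s : Set α} {t : Set β} (hs : s.Finite) (ht : t.Finite)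
    {f : α → β} (hf : MapsTo f s t) (n : ℕ) (hn : ∀ b ∈ t, (s ∩ f ⁻¹' {b}).ncard ≤ n) :
    s.ncard ≤ n * t.ncard := by
  classical
  lift s to Finset α using hs
  lift t to Finset β using ht
  simp only [ncard_coe_finset, ncard_coe_inter_preimage_singleton] at hn ⊢
  exact Finset.card_le_mul_card_image_of_maps_to hf n hn

theorem mul_ncard_le_ncard_of_fibers {s : Set α} {t : Set β} (hs : s.Finite) (ht : t.Finite)
    (f : α → β) (n : ℕ) (hn : ∀ b ∈ t, n ≤ (s ∩ f ⁻¹' {b}).ncard) :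
    n * t.ncard ≤ s.ncard := by
  classical
  lift s to Finset α using hs
  lift t to Finset β using ht
  simp only [ncard_coe_finset, ncard_coe_inter_preimage_singleton] at hn ⊢
  calc n * t.card ≤ (s.filter (f · ∈ t)).card :=
        Finset.mul_card_image_le_card_of_maps_to (fun a ha => (Finset.mem_filter.mp ha).2) n
          fun b hb => by
            rw [Finset.filter_filter]
            refine (hn b hb).trans_eq (congrArg _ (Finset.filter_congr fun a _ => ?_))
            exact ⟨fun h => ⟨h ▸ hb, h⟩, And.right⟩
    _ ≤ s.card := Finset.card_filter_le _ _

theorem ncard_dependent_prod [Finite α] [Finite β] {A : Set α} {B : α → Set β} {k : ℕ}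
    (hB : ∀ a ∈ A, (B a).ncard = k) :
    {p : α × β | p.1 ∈ A ∧ p.2 ∈ B p.1}.ncard = k * A.ncard := by
  have hfiber : ∀ a ∈ A, ({p : α × β | p.1 ∈ A ∧ p.2 ∈ B p.1} ∩ Prod.fst ⁻¹' {a}).ncard = k := by
    intro a ha
    rw [← hB a ha, ← ncard_image_of_injective (B a) (Prod.mk_right_injective a)]
    congr 1
    ext ⟨x, y⟩
    simp only [mem_inter_iff, mem_ofPred_eq, mem_preimage, mem_singleton_iff, mem_image,
      Prod.mk.injEq]
    constructor
    · rintro ⟨⟨-, hy⟩, rfl⟩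
      exact ⟨y, hy, rfl, rfl⟩
    · rintro ⟨y, hy, rfl, rfl⟩
      exact ⟨⟨ha, hy⟩, rfl⟩
  exact le_antisymm
    (ncard_le_mul_ncard_of_mapsTo_s15 (toFinite _) (toFinite _) (fun p hp => hp.1) k
      fun a ha => (hfiber a ha).le)
    (mul_ncard_le_ncard_of_fibers (toFinite _) (toFinite _) Prod.fst k
      fun a ha => (hfiber a ha).ge)

theorem ncard_union_union_add_two_mul {A B C G : Set α} (hA : A.Finite) (hB : B.Finite)
    (hC : C.Finite) (hAB : A ∩ B = G) (hAC : A ∩ C = G) (hBC : B ∩ C = G) :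
    (A ∪ B ∪ C).ncard + 2 * G.ncard = A.ncard + B.ncard + C.ncard := by
  have h₁ := ncard_union_add_ncard_inter A B hA hB
  have h₂ := ncard_union_add_ncard_inter (A ∪ B) C (hA.union hB) hC
  rw [union_inter_distrib_right, hAC, hBC, union_self] at h₂
  rw [hAB] at h₁
  omega

end Set

instance Submodule.finite_of_finite {R M : Type*} [Semiring R] [AddCommMonoid M] [Module R M]
    [Finite M] : Finite (Submodule R M) :=
  Finite.of_injective _ SetLike.coe_injective

namespace Submodule

theorem disjoint_of_finrank_eq_one_s15 {P S : Submodule F V} (hP : finrank F P = 1)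
    (hPS : ¬ P ≤ S) : Disjoint P S :=
  (isAtom_iff_finrank_eq_one.mpr hP).not_le_iff_disjoint.mp hPS

variable [FiniteDimensional F V]

theorem finrank_sup_of_disjoint {A B : Submodule F V} (h : Disjoint A B) :
    finrank F ↥(A ⊔ B) = finrank F A + finrank F B := by
  rw [← finrank_sup_add_finrank_inf_eq, h.eq_bot, finrank_bot, add_zero]

theorem finrank_sup_of_finrank_eq_one {A B : Submodule F V} (hA : finrank F A = 1)
    (hB : finrank F B = 1) (hAB : A ≠ B) : finrank F ↥(A ⊔ B) = 2 := by
  rw [finrank_sup_of_disjoint ((isAtom_iff_finrank_eq_one.mpr hA).disjoint_of_ne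
    (isAtom_iff_finrank_eq_one.mpr hB) hAB), hA, hB]

theorem finrank_inf_eq_one_of_le_plane {ℓ m X : Submodule F V} (hℓ : finrank F ℓ = 2)
    (hm : finrank F m = 2) (hX : finrank F X = 3) (hℓX : ℓ ≤ X) (hmX : m ≤ X) (hne : ℓ ≠ m) :
    finrank F ↥(ℓ ⊓ m) = 1 := by
  have hsum := finrank_sup_add_finrank_inf_eq ℓ m
  have hsup : finrank F ↥(ℓ ⊔ m) ≤ 3 := hX ▸ finrank_mono (sup_le hℓX hmX)
  have hinf : finrank F ↥(ℓ ⊓ m) ≤ 2 := hℓ ▸ finrank_mono inf_le_left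
  have hinf_ne : finrank F ↥(ℓ ⊓ m) ≠ 2 := fun h2 => by
    have hℓm : ℓ ≤ m := (eq_of_le_of_finrank_eq inf_le_left (h2.trans hℓ.symm)) ▸ inf_le_right
    exact hne (eq_of_le_of_finrank_eq hℓm (hℓ.trans hm.symm))
  omega

theorem exists_lines_inf_eq_of_finrank_eq_three {X P : Submodule F V} (hP : finrank F P = 1)
    (hPX : P ≤ X) (hX : finrank F X = 3) :
    ∃ m₁ m₂ : Submodule F V, finrank F m₁ = 2 ∧ finrank F m₂ = 2 ∧ m₁ ≤ X ∧ m₂ ≤ X ∧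
      m₁ ⊓ m₂ = P := by
  obtain ⟨a, haX, haP⟩ := SetLike.exists_of_lt (lt_of_le_of_ne hPX (by grind))
  have ha : finrank F ↥(P ⊔ span F {a}) = 2 := by rw [finrank_sup_span_singleton haP, hP]
  have haX' : P ⊔ span F {a} ≤ X := sup_le hPX ((span_singleton_le_iff_mem a X).mpr haX)
  obtain ⟨b, hbX, hba⟩ := SetLike.exists_of_lt (lt_of_le_of_ne haX' (by grind))
  have hb : finrank F ↥(P ⊔ span F {b}) = 2 := by
    rw [finrank_sup_span_singleton fun hbP => hba (mem_sup_left hbP), hP]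
  have hbX' : P ⊔ span F {b} ≤ X := sup_le hPX ((span_singleton_le_iff_mem b X).mpr hbX)
  have hne : P ⊔ span F {a} ≠ P ⊔ span F {b} := fun h =>
    hba (h ▸ mem_sup_right (mem_span_singleton_self b))
  refine ⟨_, _, ha, hb, haX', hbX', (eq_of_le_of_finrank_eq (le_inf le_sup_left le_sup_left)
    ?_).symm⟩
  rw [hP, finrank_inf_eq_one_of_le_plane ha hb hX haX' hbX' hne]

end Submodule

section VectorCount

variable {q : ℕ} [Fintype F] [FiniteDimensional F V]

theorem ncard_coe_submodule (hq : Fintype.card F = q) (X : Submodule F V) :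
    (X : Set V).ncard = q ^ finrank F X := by
  rw [← Nat.card_coe_set_eq, SetLike.coe_sort_coe, Module.natCard_eq_pow_finrank (K := F),
    Nat.card_eq_fintype_card, hq]

theorem ncard_sdiff_coe_submodule (hq : Fintype.card F = q) {X Y : Submodule F V} (h : X ≤ Y) :
    ((Y : Set V) \ X).ncard = q ^ finrank F Y - q ^ finrank F X := by
  have : Finite V := Module.finite_of_finite F
  rw [← ncard_coe_submodule hq, ← ncard_coe_submodule hq,
    ← ncard_sdiff_add_ncard_of_subset (show (X : Set V) ⊆ Y from h), Nat.add_sub_cancel]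

theorem ncard_compl_coe_submodule (hq : Fintype.card F = q) (X : Submodule F V) :
    ((X : Set V)ᶜ).ncard = q ^ finrank F V - q ^ finrank F X := by
  rw [compl_eq_univ_sdiff, ← top_coe (R := F), ncard_sdiff_coe_submodule hq le_top, finrank_top]

theorem mul_ncard_extensions_avoiding_le (hq : Fintype.card F = q) (W : Submodule F V)
    (X : Set V) :
    (q ^ (finrank F W + 1) - q ^ finrank F W) *
        {S : Submodule F V | finrank F S = finrank F W + 1 ∧ W ≤ S ∧ (S : Set V) ∩ X ⊆ W}.ncard ≤
      Xᶜ.ncard := by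
  have : Finite V := Module.finite_of_finite F
  refine mul_ncard_le_ncard_of_fibers (toFinite _) (toFinite _) (fun v => W ⊔ span F {v}) _ ?_
  rintro S ⟨hS, hWS, hSX⟩
  rw [← hS, ← ncard_sdiff_coe_submodule hq hWS]
  refine ncard_le_ncard (fun v ⟨hvS, hvW⟩ => ⟨fun hvX => hvW (hSX ⟨hvS, hvX⟩), ?_⟩) (toFinite _)
  exact eq_of_le_of_finrank_eq (sup_le hWS ((span_singleton_le_iff_mem v S).mpr hvS))
    ((finrank_sup_span_singleton hvW).trans hS.symm)

/-- Double count the pairs `(x, y)` with `x ∉ W` and `y ∉ W + ⟨x⟩`, each of which spans with `W`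
a superspace of dimension `dim W + 2`. -/
theorem mul_ncard_superspaces_two_le (hq : Fintype.card F = q) (W : Submodule F V) :
    ((q ^ (finrank F W + 2) - q ^ finrank F W) *
        (q ^ (finrank F W + 2) - q ^ (finrank F W + 1))) *
        {S : Submodule F V | finrank F S = finrank F W + 2 ∧ W ≤ S}.ncard ≤
      (q ^ finrank F V - q ^ finrank F W) * (q ^ finrank F V - q ^ (finrank F W + 1)) := by
  have : Finite V := Module.finite_of_finite F
  set d := finrank F W
  have hpairs := ncard_dependent_prod (A := (W : Set V)ᶜ)
    (B := fun x => ((W ⊔ span F {x} : Submodule F V) : Set V)ᶜ)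
    (k := q ^ finrank F V - q ^ (d + 1)) fun x hx => by
      rw [ncard_compl_coe_submodule hq, finrank_sup_span_singleton hx]
  rw [ncard_compl_coe_submodule hq, mul_comm] at hpairs
  refine hpairs ▸ mul_ncard_le_ncard_of_fibers (toFinite _) (toFinite _)
    (fun p => W ⊔ span F {p.1} ⊔ span F {p.2}) _ fun S ⟨hS, hWS⟩ => ?_
  have hpairsS := ncard_dependent_prod (A := (S : Set V) \ W)
    (B := fun x => (S : Set V) \ (W ⊔ span F {x} : Submodule F V))
    (k := q ^ (d + 2) - q ^ (d + 1)) fun x ⟨hxS, hxW⟩ => by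
      rw [ncard_sdiff_coe_submodule hq (sup_le hWS ((span_singleton_le_iff_mem x S).mpr hxS)),
        finrank_sup_span_singleton hxW, hS]
  rw [ncard_sdiff_coe_submodule hq hWS, hS, mul_comm] at hpairsS
  refine hpairsS ▸ ncard_le_ncard ?_ (toFinite _)
  rintro ⟨x, y⟩ ⟨⟨hxS, hxW⟩, hyS, hyW⟩
  refine ⟨⟨hxW, hyW⟩, eq_of_le_of_finrank_eq ?_ ?_⟩
  · exact sup_le (sup_le hWS ((span_singleton_le_iff_mem x S).mpr hxS))
      ((span_singleton_le_iff_mem y S).mpr hyS)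
  · rw [finrank_sup_span_singleton hyW, finrank_sup_span_singleton hxW, hS]

theorem ncard_solids_through_line_le (hq : Fintype.card F = q) (hV : finrank F V = 7)
    {m : Submodule F V} (hm : finrank F m = 2) :
    {S : Submodule F V | finrank F S = 4 ∧ m ≤ S}.ncard ≤
      q ^ 6 + q ^ 5 + 2 * q ^ 4 + 2 * q ^ 3 + 2 * q ^ 2 + q + 1 := by
  have hcount := mul_ncard_superspaces_two_le hq m
  rw [hV, hm] at hcount
  obtain ⟨r, rfl⟩ : ∃ r, q = r + 2 := ⟨q - 2, by have := hq ▸ Fintype.one_lt_card; omega⟩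
  have hle : ∀ a b, a ≤ b → (r + 2) ^ a ≤ (r + 2) ^ b := fun a b => Nat.pow_le_pow_right (by omega)
  have hpos : 0 < ((r + 2) ^ (2 + 2) - (r + 2) ^ 2) * ((r + 2) ^ (2 + 2) - (r + 2) ^ (2 + 1)) :=
    Nat.mul_pos (Nat.sub_pos_of_lt (Nat.pow_lt_pow_right (by omega) (by omega)))
      (Nat.sub_pos_of_lt (Nat.pow_lt_pow_right (by omega) (by omega)))
  refine Nat.le_of_mul_le_mul_left (hcount.trans_eq ?_) hpos
  zify [hle 2 7 (by omega), hle 3 7 (by omega), hle 2 (2 + 2) (by omega),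
    hle (2 + 1) (2 + 2) (by omega)]
  ring

end VectorCount

/-- For `k = 1` and a point `P`, these are the points of `X` other than `P`. -/
def subspacesAvoiding (k : ℕ) (X P : Submodule F V) : Set (Submodule F V) :=
  {Q | finrank F Q = k ∧ Q ≤ X ∧ ¬ P ≤ Q}

section SubspacesAvoiding

variable {q : ℕ} [Fintype F] [FiniteDimensional F V]

theorem mul_ncard_subspacesAvoiding_one_add_le (hq : Fintype.card F = q)
    {X P : Submodule F V} (hP : finrank F P = 1) (hPX : P ≤ X) :
    (q - 1) * (subspacesAvoiding 1 X P).ncard + q ≤ q ^ finrank F X := by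
  have : Finite V := Module.finite_of_finite F
  have hfibers : ∀ Q ∈ subspacesAvoiding 1 X P,
      q - 1 ≤ (((X : Set V) \ P) ∩ (fun v => span F {v}) ⁻¹' {Q}).ncard := by
    rintro Q ⟨hQ, hQX, hPQ⟩
    have hQ0 : ((Q : Set V) \ (⊥ : Submodule F V)).ncard = q - 1 := by
      rw [ncard_sdiff_coe_submodule hq bot_le, hQ, finrank_bot, pow_one, pow_zero]
    refine hQ0 ▸ ncard_le_ncard ?_ (toFinite _)
    rintro v ⟨hvQ, hv0⟩
    have hspan := eq_span_singleton_of_mem_of_finrank_eq_one hQ hvQ (by simpa using hv0)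
    refine ⟨⟨hQX hvQ, fun hvP => hPQ ?_⟩, hspan.symm⟩
    exact (eq_of_le_of_finrank_eq (hspan ▸ (span_singleton_le_iff_mem v P).mpr hvP)
      (hQ.trans hP.symm)).ge
  have hle := mul_ncard_le_ncard_of_fibers (toFinite _) (toFinite _) _ _ hfibers
  have hq1 : q ^ 1 ≤ q ^ finrank F X :=
    Nat.pow_le_pow_right (hq ▸ Fintype.card_pos) (hP ▸ finrank_mono hPX)
  rw [ncard_sdiff_coe_submodule hq hPX, hP] at hle
  rw [pow_one] at hle hq1
  omega

theorem ncard_subspacesAvoiding_one_le_of_finrank_eq_three (hq : Fintype.card F = q)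
    {X P : Submodule F V} (hP : finrank F P = 1) (hPX : P ≤ X) (hX : finrank F X = 3) :
    (subspacesAvoiding 1 X P).ncard ≤ q ^ 2 + q := by
  have hcount := mul_ncard_subspacesAvoiding_one_add_le hq hP hPX
  obtain ⟨r, rfl⟩ : ∃ r, q = r + 1 + 1 := ⟨q - 2, by have := hq ▸ Fintype.one_lt_card; omega⟩
  rw [hX, Nat.add_sub_cancel] at hcount
  refine Nat.le_of_mul_le_mul_left (?_ : (r + 1) * _ ≤ (r + 1) * _) r.succ_pos
  nlinarith

theorem ncard_subspacesAvoiding_one_le_of_finrank_le_two (hq : Fintype.card F = q)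
    {X P : Submodule F V} (hP : finrank F P = 1) (hPX : P ≤ X) (hX : finrank F X ≤ 2) :
    (subspacesAvoiding 1 X P).ncard ≤ q := by
  have hcount := mul_ncard_subspacesAvoiding_one_add_le hq hP hPX
  obtain ⟨r, rfl⟩ : ∃ r, q = r + 1 + 1 := ⟨q - 2, by have := hq ▸ Fintype.one_lt_card; omega⟩
  have hmono := Nat.pow_le_pow_right (by omega : 0 < r + 1 + 1) hX
  rw [Nat.add_sub_cancel] at hcount
  refine Nat.le_of_mul_le_mul_left (?_ : (r + 1) * _ ≤ (r + 1) * _) r.succ_pos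
  nlinarith

/-- A line `ℓ` of the plane `X` avoiding `P` is the span of its points on two fixed lines
through `P`. -/
theorem ncard_subspacesAvoiding_two_le (hq : Fintype.card F = q) {X P : Submodule F V}
    (hP : finrank F P = 1) (hPX : P ≤ X) (hX : finrank F X = 3) :
    (subspacesAvoiding 2 X P).ncard ≤ q ^ 2 := by
  have : Finite V := Module.finite_of_finite F
  obtain ⟨m₁, m₂, hm₁, hm₂, hm₁X, hm₂X, hm⟩ := exists_lines_inf_eq_of_finrank_eq_three hP hPX hX
  have hmeet : ∀ ℓ ∈ subspacesAvoiding 2 X P, ∀ m : Submodule F V, finrank F m = 2 → m ≤ X →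
      P ≤ m → ℓ ⊓ m ∈ subspacesAvoiding 1 m P := by
    rintro ℓ ⟨hℓ, hℓX, hPℓ⟩ m hm hmX hPm
    exact ⟨finrank_inf_eq_one_of_le_plane hℓ hm hX hℓX hmX (fun h => hPℓ (h ▸ hPm)),
      inf_le_right, fun h => hPℓ (h.trans inf_le_left)⟩
  have hPm₁ : P ≤ m₁ := hm ▸ inf_le_left
  have hPm₂ : P ≤ m₂ := hm ▸ inf_le_right
  have hspan : LeftInvOn (fun AB => AB.1 ⊔ AB.2) (fun ℓ => (ℓ ⊓ m₁, ℓ ⊓ m₂))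
      (subspacesAvoiding 2 X P) := by
    intro ℓ hℓ
    obtain ⟨hA, -, hPA⟩ := hmeet ℓ hℓ m₁ hm₁ hm₁X hPm₁
    obtain ⟨hB, -, -⟩ := hmeet ℓ hℓ m₂ hm₂ hm₂X hPm₂
    have hAB : ℓ ⊓ m₁ ≠ ℓ ⊓ m₂ := fun h => hPA (eq_of_le_of_finrank_eq
      (hm ▸ le_inf inf_le_right (h ▸ inf_le_right)) (hA.trans hP.symm)).ge
    exact eq_of_le_of_finrank_eq (sup_le inf_le_left inf_le_left)
      ((finrank_sup_of_finrank_eq_one hA hB hAB).trans hℓ.1.symm)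
  calc (subspacesAvoiding 2 X P).ncard
      ≤ (subspacesAvoiding 1 m₁ P ×ˢ subspacesAvoiding 1 m₂ P).ncard :=
        ncard_le_ncard_of_injOn _ (fun ℓ hℓ => ⟨hmeet ℓ hℓ m₁ hm₁ hm₁X hPm₁,
          hmeet ℓ hℓ m₂ hm₂ hm₂X hPm₂⟩) hspan.injOn (toFinite _)
    _ ≤ q * q := by
      rw [ncard_prod]
      exact Nat.mul_le_mul (ncard_subspacesAvoiding_one_le_of_finrank_le_two hq hP hPm₁ hm₁.le)
        (ncard_subspacesAvoiding_one_le_of_finrank_le_two hq hP hPm₂ hm₂.le)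
    _ = q ^ 2 := (sq q).symm

end SubspacesAvoiding

structure IsPlaneTriple (P₁ P₂ : Submodule F V) (E : Fin 3 → Submodule F V) : Prop where
  finrank_P₁ : finrank F P₁ = 1
  finrank_P₂ : finrank F P₂ = 1
  finrank_E : ∀ i, finrank F (E i) = 3
  inf_eq : ∀ i j, i ≠ j → E i ⊓ E j = P₁
  not_le_sup : ∀ i j, i ≠ j → ¬ P₂ ≤ E i ⊔ E j

def contactPlanes (P₁ P₂ : Submodule F V) (E : Fin 3 → Submodule F V) : Set (Submodule F V) :=
  {T | finrank F T = 3 ∧ P₂ ≤ T ∧ ¬ P₁ ≤ T ∧ ∀ i, T ⊓ E i ≠ ⊥}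

namespace IsPlaneTriple

variable {P₁ P₂ : Submodule F V} {E : Fin 3 → Submodule F V}

theorem P₁_le (h : IsPlaneTriple P₁ P₂ E) (i : Fin 3) : P₁ ≤ E i :=
  have ⟨j, hji⟩ := exists_ne i
  h.inf_eq j i hji ▸ inf_le_right

theorem P₁_ne_P₂ (h : IsPlaneTriple P₁ P₂ E) : P₁ ≠ P₂ :=
  fun heq => h.not_le_sup 0 1 (by decide) (heq ▸ (h.P₁_le 0).trans le_sup_left)

variable [FiniteDimensional F V]

theorem finrank_sup (h : IsPlaneTriple P₁ P₂ E) {i j : Fin 3} (hij : i ≠ j) :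
    finrank F ↥(E i ⊔ E j) = 5 := by
  have := finrank_sup_add_finrank_inf_eq (E i) (E j)
  rw [h.inf_eq i j hij, h.finrank_E, h.finrank_E, h.finrank_P₁] at this
  omega

theorem finrank_sup_sup_P₂ (h : IsPlaneTriple P₁ P₂ E) {i j : Fin 3} (hij : i ≠ j) :
    finrank F ↥(E i ⊔ E j ⊔ P₂) = 6 := by
  rw [finrank_sup_of_disjoint (disjoint_of_finrank_eq_one_s15 h.finrank_P₂ (h.not_le_sup i j hij)).symm,
    h.finrank_sup hij, h.finrank_P₂]

theorem finrank_contact_sup (h : IsPlaneTriple P₁ P₂ E) {S : Submodule F V} (hS : ¬ P₁ ≤ S)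
    {i j : Fin 3} (hij : i ≠ j) :
    finrank F ↥(S ⊓ E i ⊔ S ⊓ E j ⊔ P₂) = finrank F ↥(S ⊓ E i) + finrank F ↥(S ⊓ E j) + 1 := by
  have hcontacts : Disjoint (S ⊓ E i) (S ⊓ E j) := disjoint_iff_inf_le.mpr <|
    (disjoint_of_finrank_eq_one_s15 h.finrank_P₁ hS).symm.eq_bot ▸
      le_inf (inf_le_left.trans inf_le_left)
        (h.inf_eq i j hij ▸ inf_le_inf inf_le_right inf_le_right)
  have hP₂ : Disjoint (S ⊓ E i ⊔ S ⊓ E j) P₂ := (disjoint_of_finrank_eq_one_s15 h.finrank_P₂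
    fun hle => h.not_le_sup i j hij (hle.trans (sup_le_sup inf_le_right inf_le_right))).symm
  rw [finrank_sup_of_disjoint hP₂, finrank_sup_of_disjoint hcontacts, h.finrank_P₂]

theorem finrank_inf_add_finrank_inf_lt (h : IsPlaneTriple P₁ P₂ E) {S : Submodule F V}
    (hP₂S : P₂ ≤ S) (hS : ¬ P₁ ≤ S) {i j : Fin 3} (hij : i ≠ j) :
    finrank F ↥(S ⊓ E i) + finrank F ↥(S ⊓ E j) < finrank F S := by
  have := finrank_mono (show S ⊓ E i ⊔ S ⊓ E j ⊔ P₂ ≤ S from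
    sup_le (sup_le inf_le_left inf_le_left) hP₂S)
  rw [h.finrank_contact_sup hS hij] at this
  omega

theorem contact_sup_eq (h : IsPlaneTriple P₁ P₂ E) {S : Submodule F V} (hP₂S : P₂ ≤ S)
    (hS : ¬ P₁ ≤ S) {i j : Fin 3} (hij : i ≠ j)
    (hfr : finrank F ↥(S ⊓ E i) + finrank F ↥(S ⊓ E j) + 1 = finrank F S) :
    S ⊓ E i ⊔ S ⊓ E j ⊔ P₂ = S :=
  eq_of_le_of_finrank_eq (sup_le (sup_le inf_le_left inf_le_left) hP₂S)
    ((h.finrank_contact_sup hS hij).trans hfr)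

theorem finrank_inf_eq_two_or_forall_eq_one (h : IsPlaneTriple P₁ P₂ E) {S : Submodule F V}
    (hS : finrank F S = 4) (hP₂S : P₂ ≤ S) (hP₁S : ¬ P₁ ≤ S) (hSE : ∀ k, S ⊓ E k ≠ ⊥) :
    (∃ i, finrank F ↥(S ⊓ E i) = 2) ∨ ∀ k, finrank F ↥(S ⊓ E k) = 1 := by
  refine or_iff_not_imp_left.mpr fun hno k => ?_
  obtain ⟨j, hjk⟩ := exists_ne k
  have hlt := h.finrank_inf_add_finrank_inf_lt hP₂S hP₁S hjk.symm
  have hk := one_le_finrank_iff.mpr (hSE k)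
  have hj := one_le_finrank_iff.mpr (hSE j)
  have hk2 : finrank F ↥(S ⊓ E k) ≠ 2 := fun h2 => hno ⟨k, h2⟩
  omega

theorem finrank_inf_of_mem_contactPlanes (h : IsPlaneTriple P₁ P₂ E) {T : Submodule F V}
    (hT : T ∈ contactPlanes P₁ P₂ E) (i : Fin 3) : finrank F ↥(T ⊓ E i) = 1 := by
  obtain ⟨hT, hP₂T, hP₁T, hTE⟩ := hT
  obtain ⟨j, hji⟩ := exists_ne i
  have hlt := h.finrank_inf_add_finrank_inf_lt hP₂T hP₁T hji.symm
  have hi := one_le_finrank_iff.mpr (hTE i)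
  have hj := one_le_finrank_iff.mpr (hTE j)
  omega

theorem contact_sup_eq_of_mem_contactPlanes (h : IsPlaneTriple P₁ P₂ E) {T : Submodule F V}
    (hT : T ∈ contactPlanes P₁ P₂ E) {i j : Fin 3} (hij : i ≠ j) :
    T ⊓ E i ⊔ T ⊓ E j ⊔ P₂ = T :=
  h.contact_sup_eq hT.2.1 hT.2.2.1 hij <| by
    rw [h.finrank_inf_of_mem_contactPlanes hT, h.finrank_inf_of_mem_contactPlanes hT, hT.1]

theorem finrank_sup_of_mem_contactPlanes (h : IsPlaneTriple P₁ P₂ E) {T : Submodule F V}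
    (hT : T ∈ contactPlanes P₁ P₂ E) (i : Fin 3) : finrank F ↥(T ⊔ E i) = 5 := by
  have := finrank_sup_add_finrank_inf_eq T (E i)
  rw [hT.1, h.finrank_E, h.finrank_inf_of_mem_contactPlanes hT] at this
  omega

theorem finrank_sup_P₁_of_mem_contactPlanes (h : IsPlaneTriple P₁ P₂ E) {T : Submodule F V}
    (hT : T ∈ contactPlanes P₁ P₂ E) : finrank F ↥(T ⊔ P₁) = 4 := by
  rw [finrank_sup_of_disjoint (disjoint_of_finrank_eq_one_s15 h.finrank_P₁ hT.2.2.1).symm, hT.1,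
    h.finrank_P₁]

theorem sup_inf_sup_eq (h : IsPlaneTriple P₁ P₂ E) {T : Submodule F V}
    (hT : T ∈ contactPlanes P₁ P₂ E) {i j : Fin 3} (hij : i ≠ j) :
    (T ⊔ E i) ⊓ (T ⊔ E j) = T ⊔ P₁ := by
  have hTle : T ≤ E i ⊔ E j ⊔ P₂ := h.contact_sup_eq_of_mem_contactPlanes hT hij ▸
    sup_le_sup_right (sup_le_sup inf_le_right inf_le_right) P₂
  have hsup : (T ⊔ E i) ⊔ (T ⊔ E j) = E i ⊔ E j ⊔ P₂ := le_antisymm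
    (sup_le (sup_le hTle (le_sup_left.trans le_sup_left))
      (sup_le hTle (le_sup_right.trans le_sup_left)))
    (sup_le (sup_le (le_sup_right.trans le_sup_left) (le_sup_right.trans le_sup_right))
      (hT.2.1.trans (le_sup_left.trans le_sup_left)))
  have hinf := finrank_sup_add_finrank_inf_eq (T ⊔ E i) (T ⊔ E j)
  rw [hsup, h.finrank_sup_sup_P₂ hij, h.finrank_sup_of_mem_contactPlanes hT,
    h.finrank_sup_of_mem_contactPlanes hT] at hinf
  have hTP₁ := h.finrank_sup_P₁_of_mem_contactPlanes hT
  exact (eq_of_le_of_finrank_eq (le_inf (sup_le_sup_left (h.P₁_le i) T)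
    (sup_le_sup_left (h.P₁_le j) T)) (by omega)).symm

theorem finrank_inf_sup_sup_le_two (h : IsPlaneTriple P₁ P₂ E) {R : Submodule F V}
    (hR : finrank F R = 1) {i j : Fin 3} (hij : i ≠ j) :
    finrank F ↥(E i ⊓ (E j ⊔ R ⊔ P₂)) ≤ 2 := by
  by_contra hlt
  have hEi : E i ≤ E j ⊔ R ⊔ P₂ :=
    (eq_of_le_of_finrank_le (inf_le_left : E i ⊓ (E j ⊔ R ⊔ P₂) ≤ E i)
      (by rw [h.finrank_E]; omega)) ▸ inf_le_right
  have hle := Submodule.finrank_mono (show E i ⊔ E j ⊔ P₂ ≤ E j ⊔ R ⊔ P₂ from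
    sup_le (sup_le hEi (le_sup_left.trans le_sup_left)) le_sup_right)
  have h₁ := finrank_add_le_finrank_add_finrank (E j ⊔ R) P₂
  have h₂ := finrank_add_le_finrank_add_finrank (E j) R
  rw [h.finrank_sup_sup_P₂ hij] at hle
  rw [h.finrank_E, hR] at h₂
  rw [h.finrank_P₂] at h₁
  omega

variable {q : ℕ} [Fintype F]

/-- A contact plane `T` is spanned by `P₂` and its points on `E 0` and `E 2`; once the point `R` on
`E 2` is fixed, the point on `E 0` lies on the line `E 0 ⊓ (E 1 ⊔ R ⊔ P₂)`. -/
theorem ncard_contactPlanes_le (hq : Fintype.card F = q)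
    (h : IsPlaneTriple P₁ P₂ E) : (contactPlanes P₁ P₂ E).ncard ≤ q * (q ^ 2 + q) := by
  have : Finite V := Module.finite_of_finite F
  refine (ncard_le_mul_ncard_of_mapsTo_s15 (toFinite _) (toFinite _) (f := (· ⊓ E 2))
    (t := subspacesAvoiding 1 (E 2) P₁) (fun T hT => ⟨h.finrank_inf_of_mem_contactPlanes hT 2,
      inf_le_right, fun hle => hT.2.2.1 (hle.trans inf_le_left)⟩) q fun R hR => ?_).trans
    (Nat.mul_le_mul_left q (ncard_subspacesAvoiding_one_le_of_finrank_eq_three hq h.finrank_P₁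
      (h.P₁_le 2) (h.finrank_E 2)))
  have hmaps : MapsTo (· ⊓ E 0) (contactPlanes P₁ P₂ E ∩ (· ⊓ E 2) ⁻¹' {R})
      (subspacesAvoiding 1 (E 0 ⊓ (E 1 ⊔ R ⊔ P₂)) P₁) := by
    rintro T ⟨hT, hTR : T ⊓ E 2 = R⟩
    refine ⟨h.finrank_inf_of_mem_contactPlanes hT 0, le_inf inf_le_right ?_,
      fun hle => hT.2.2.1 (hle.trans inf_le_left)⟩
    rw [← h.contact_sup_eq_of_mem_contactPlanes hT (show (1 : Fin 3) ≠ 2 by decide), hTR]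
    exact inf_le_left.trans (sup_le_sup_right (sup_le_sup_right inf_le_right R) P₂)
  have hinv : LeftInvOn (· ⊔ R ⊔ P₂) (· ⊓ E 0) (contactPlanes P₁ P₂ E ∩ (· ⊓ E 2) ⁻¹' {R}) := by
    rintro T ⟨hT, hTR : T ⊓ E 2 = R⟩
    rw [← hTR]
    exact h.contact_sup_eq_of_mem_contactPlanes hT (by decide)
  calc _ ≤ (subspacesAvoiding 1 (E 0 ⊓ (E 1 ⊔ R ⊔ P₂)) P₁).ncard :=
        ncard_le_ncard_of_injOn _ hmaps hinv.injOn (toFinite _)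
    _ ≤ q := ncard_subspacesAvoiding_one_le_of_finrank_le_two hq h.finrank_P₁
        (le_inf (h.P₁_le 0) ((h.P₁_le 1).trans (le_sup_left.trans le_sup_left)))
        (h.finrank_inf_sup_sup_le_two hR.1 (by decide))

theorem ncard_union_sup_add_of_mem_contactPlanes (hq : Fintype.card F = q)
    (h : IsPlaneTriple P₁ P₂ E) {T : Submodule F V} (hT : T ∈ contactPlanes P₁ P₂ E) :
    ((T ⊔ E 0 : Submodule F V) ∪ (T ⊔ E 1 : Submodule F V) ∪ (T ⊔ E 2 : Submodule F V) :
      Set V).ncard + 2 * q ^ 4 = 3 * q ^ 5 := by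
  have : Finite V := Module.finite_of_finite F
  have hcap : ∀ i j : Fin 3, i ≠ j → ((T ⊔ E i : Submodule F V) : Set V) ∩ ↑(T ⊔ E j) =
      ↑(T ⊔ P₁) := fun i j hij => by rw [← coe_inf, h.sup_inf_sup_eq hT hij]
  have := ncard_union_union_add_two_mul (toFinite _) (toFinite _) (toFinite _)
    (hcap 0 1 (by decide)) (hcap 0 2 (by decide)) (hcap 1 2 (by decide))
  simp only [ncard_coe_submodule hq, h.finrank_sup_of_mem_contactPlanes hT,
    h.finrank_sup_P₁_of_mem_contactPlanes hT] at this
  exact this.trans (by ring)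

theorem ncard_solids_over_contactPlane_le (hq : Fintype.card F = q)
    (hV : finrank F V = 7) (h : IsPlaneTriple P₁ P₂ E) {T : Submodule F V}
    (hT : T ∈ contactPlanes P₁ P₂ E) :
    {S : Submodule F V | finrank F S = 4 ∧ T ≤ S ∧ ∀ i, S ⊓ E i ≤ T}.ncard ≤
      q ^ 3 + q ^ 2 - 2 * q := by
  have : Finite V := Module.finite_of_finite F
  set X : Set V := ↑(T ⊔ E 0) ∪ ↑(T ⊔ E 1) ∪ ↑(T ⊔ E 2)
  have hX := h.ncard_union_sup_add_of_mem_contactPlanes hq hT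
  have hcompl : X.ncard + Xᶜ.ncard = q ^ 7 := by
    rw [ncard_add_ncard_compl, Module.natCard_eq_pow_finrank (K := F), Nat.card_eq_fintype_card,
      hq, hV]
  have hsub : {S : Submodule F V | finrank F S = 4 ∧ T ≤ S ∧ ∀ i, S ⊓ E i ≤ T} ⊆
      {S | finrank F S = finrank F T + 1 ∧ T ≤ S ∧ (S : Set V) ∩ X ⊆ T} := by
    rintro S ⟨hS, hTS, hST⟩
    refine ⟨by rw [hS, hT.1], hTS, fun v ⟨hvS, hvX⟩ => ?_⟩
    obtain ⟨k, hk⟩ : ∃ k, v ∈ T ⊔ E k := by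
      rcases hvX with (hv | hv) | hv
      exacts [⟨0, hv⟩, ⟨1, hv⟩, ⟨2, hv⟩]
    have hmod : (T ⊔ E k) ⊓ S = T := by
      rw [sup_inf_assoc_of_le _ hTS, inf_comm]
      exact sup_eq_left.mpr (hST k)
    exact hmod ▸ mem_inf.mpr ⟨hk, hvS⟩
  have hcount := (Nat.mul_le_mul_left _ (ncard_le_ncard hsub (toFinite _))).trans
    (mul_ncard_extensions_avoiding_le hq T X)
  rw [hT.1] at hcount
  obtain ⟨r, rfl⟩ : ∃ r, q = r + 2 := ⟨q - 2, by have := hq ▸ Fintype.one_lt_card; omega⟩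
  have h34 : (r + 2) ^ 3 ≤ (r + 2) ^ (3 + 1) := Nat.pow_le_pow_right (by omega) (by omega)
  have h2q : 2 * (r + 2) ≤ (r + 2) ^ 3 + (r + 2) ^ 2 := by nlinarith
  refine Nat.le_of_mul_le_mul_left (?_ : ((r + 2) ^ (3 + 1) - (r + 2) ^ 3) * _ ≤ _ * _)
    (Nat.sub_pos_of_lt (Nat.pow_lt_pow_right (by omega) (by omega)))
  zify [h34, h2q] at hcount hX hcompl ⊢
  have hid : (((r : ℤ) + 2) ^ (3 + 1) - (r + 2) ^ 3) * ((r + 2) ^ 3 + (r + 2) ^ 2 - 2 * (r + 2)) =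
      (r + 2) ^ 7 - 3 * (r + 2) ^ 5 + 2 * (r + 2) ^ 4 := by ring
  linarith

theorem ncard_solids_meeting_in_line_le (hq : Fintype.card F = q) (h : IsPlaneTriple P₁ P₂ E)
    (i : Fin 3) :
    {S : Submodule F V | finrank F S = 4 ∧ P₂ ≤ S ∧ ¬ P₁ ≤ S ∧ (∀ k, S ⊓ E k ≠ ⊥) ∧
      finrank F ↥(S ⊓ E i) = 2}.ncard ≤ q ^ 2 * (q ^ 2 + q) := by
  have : Finite V := Module.finite_of_finite F
  set M := {S : Submodule F V | finrank F S = 4 ∧ P₂ ≤ S ∧ ¬ P₁ ≤ S ∧ (∀ k, S ⊓ E k ≠ ⊥) ∧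
    finrank F ↥(S ⊓ E i) = 2}
  obtain ⟨j, hji⟩ := exists_ne i
  have hj : ∀ S ∈ M, finrank F ↥(S ⊓ E j) = 1 := by
    rintro S ⟨hS, hP₂S, hP₁S, hSE, hSi⟩
    have hlt := h.finrank_inf_add_finrank_inf_lt hP₂S hP₁S hji.symm
    have hpos := one_le_finrank_iff.mpr (hSE j)
    omega
  have hmaps : MapsTo (fun S => (S ⊓ E i, S ⊓ E j)) M
      (subspacesAvoiding 2 (E i) P₁ ×ˢ subspacesAvoiding 1 (E j) P₁) := fun S hS =>
    ⟨⟨hS.2.2.2.2, inf_le_right, fun hle => hS.2.2.1 (hle.trans inf_le_left)⟩,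
      ⟨hj S hS, inf_le_right, fun hle => hS.2.2.1 (hle.trans inf_le_left)⟩⟩
  have hinv : LeftInvOn (fun ℓQ => ℓQ.1 ⊔ ℓQ.2 ⊔ P₂) (fun S => (S ⊓ E i, S ⊓ E j)) M :=
    fun S hS => h.contact_sup_eq hS.2.1 hS.2.2.1 hji.symm (by
      rw [hS.2.2.2.2, hj S hS, hS.1])
  refine (ncard_le_ncard_of_injOn _ hmaps hinv.injOn (toFinite _)).trans ?_
  rw [ncard_prod]
  exact Nat.mul_le_mul (ncard_subspacesAvoiding_two_le hq h.finrank_P₁ (h.P₁_le i) (h.finrank_E i))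
    (ncard_subspacesAvoiding_one_le_of_finrank_eq_three hq h.finrank_P₁ (h.P₁_le j) (h.finrank_E j))

theorem ncard_solids_spanned_by_contacts_le (hq : Fintype.card F = q)
    (h : IsPlaneTriple P₁ P₂ E) :
    {S : Submodule F V | ¬ P₁ ≤ S ∧ (∀ k, finrank F ↥(S ⊓ E k) = 1) ∧
      S ⊓ E 0 ⊔ S ⊓ E 1 ⊔ P₂ ⊔ S ⊓ E 2 = S}.ncard ≤ (q ^ 2 + q) ^ 3 := by
  have : Finite V := Module.finite_of_finite F
  set M := {S : Submodule F V | ¬ P₁ ≤ S ∧ (∀ k, finrank F ↥(S ⊓ E k) = 1) ∧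
    S ⊓ E 0 ⊔ S ⊓ E 1 ⊔ P₂ ⊔ S ⊓ E 2 = S}
  have hmem : ∀ S ∈ M, ∀ k, S ⊓ E k ∈ subspacesAvoiding 1 (E k) P₁ :=
    fun S hS k => ⟨hS.2.1 k, inf_le_right, fun hle => hS.1 (hle.trans inf_le_left)⟩
  have hinv : LeftInvOn (fun Q => Q.1 ⊔ Q.2.1 ⊔ P₂ ⊔ Q.2.2) (fun S => (S ⊓ E 0, S ⊓ E 1, S ⊓ E 2))
      M := fun S hS => hS.2.2
  have hpts : ∀ k, (subspacesAvoiding 1 (E k) P₁).ncard ≤ q ^ 2 + q := fun k =>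
    ncard_subspacesAvoiding_one_le_of_finrank_eq_three hq h.finrank_P₁ (h.P₁_le k) (h.finrank_E k)
  refine (ncard_le_ncard_of_injOn (t := subspacesAvoiding 1 (E 0) P₁ ×ˢ
    subspacesAvoiding 1 (E 1) P₁ ×ˢ subspacesAvoiding 1 (E 2) P₁) _
    (fun S hS => ⟨hmem S hS 0, hmem S hS 1, hmem S hS 2⟩) hinv.injOn (toFinite _)).trans ?_
  rw [ncard_prod, ncard_prod, pow_three]
  exact Nat.mul_le_mul (hpts 0) (Nat.mul_le_mul (hpts 1) (hpts 2))

theorem ncard_solids_over_contactPlanes_le (hq : Fintype.card F = q) (hV : finrank F V = 7)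
    (h : IsPlaneTriple P₁ P₂ E) :
    {S : Submodule F V | finrank F S = 4 ∧ P₂ ≤ S ∧ ¬ P₁ ≤ S ∧
      (∀ k, finrank F ↥(S ⊓ E k) = 1) ∧ S ⊓ E 2 ≤ S ⊓ E 0 ⊔ S ⊓ E 1 ⊔ P₂}.ncard ≤
      (q ^ 3 + q ^ 2 - 2 * q) * (q * (q ^ 2 + q)) := by
  have : Finite V := Module.finite_of_finite F
  set M := {S : Submodule F V | finrank F S = 4 ∧ P₂ ≤ S ∧ ¬ P₁ ≤ S ∧
    (∀ k, finrank F ↥(S ⊓ E k) = 1) ∧ S ⊓ E 2 ≤ S ⊓ E 0 ⊔ S ⊓ E 1 ⊔ P₂}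
  have hcontacts : ∀ S ∈ M, ∀ k, S ⊓ E k ≤ S ⊓ E 0 ⊔ S ⊓ E 1 ⊔ P₂ := by
    intro S hS k
    fin_cases k
    exacts [le_sup_left.trans le_sup_left, le_sup_right.trans le_sup_left, hS.2.2.2.2]
  have hmaps : MapsTo (fun S => S ⊓ E 0 ⊔ S ⊓ E 1 ⊔ P₂) M (contactPlanes P₁ P₂ E) := by
    intro S hS
    have ⟨_, hP₂S, hP₁S, hSE, _⟩ := hS
    refine ⟨by rw [h.finrank_contact_sup hP₁S (by decide), hSE, hSE], le_sup_right,
      fun hle => hP₁S (hle.trans (sup_le (sup_le inf_le_left inf_le_left) hP₂S)), fun k => ?_⟩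
    exact ne_bot_of_le_ne_bot (one_le_finrank_iff.mp (hSE k).ge)
      (le_inf (hcontacts S hS k) inf_le_right)
  refine (ncard_le_mul_ncard_of_mapsTo_s15 (toFinite _) (toFinite _) hmaps _ fun T hT => ?_).trans
    (Nat.mul_le_mul_left _ (h.ncard_contactPlanes_le hq))
  refine (ncard_le_ncard ?_ (toFinite _)).trans (h.ncard_solids_over_contactPlane_le hq hV hT)
  rintro S ⟨hS, hST : _ = T⟩
  exact ⟨hS.1, hST ▸ sup_le (sup_le inf_le_left inf_le_left) hS.2.1, hST ▸ hcontacts S hS⟩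

theorem ncard_solids_not_through_P₁_le (hq : Fintype.card F = q) (hV : finrank F V = 7)
    (h : IsPlaneTriple P₁ P₂ E) :
    {S : Submodule F V | finrank F S = 4 ∧ P₂ ≤ S ∧ ¬ P₁ ≤ S ∧ ∀ k, S ⊓ E k ≠ ⊥}.ncard ≤
      3 * (q ^ 2 * (q ^ 2 + q)) +
        ((q ^ 2 + q) ^ 3 + (q ^ 3 + q ^ 2 - 2 * q) * (q * (q ^ 2 + q))) := by
  have : Finite V := Module.finite_of_finite F
  set L := fun i : Fin 3 => {S : Submodule F V | finrank F S = 4 ∧ P₂ ≤ S ∧ ¬ P₁ ≤ S ∧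
    (∀ k, S ⊓ E k ≠ ⊥) ∧ finrank F ↥(S ⊓ E i) = 2}
  have hcover : {S : Submodule F V | finrank F S = 4 ∧ P₂ ≤ S ∧ ¬ P₁ ≤ S ∧ ∀ k, S ⊓ E k ≠ ⊥} ⊆
      (⋃ i ∈ Finset.univ, L i) ∪
        ({S | ¬ P₁ ≤ S ∧ (∀ k, finrank F ↥(S ⊓ E k) = 1) ∧ S ⊓ E 0 ⊔ S ⊓ E 1 ⊔ P₂ ⊔ S ⊓ E 2 = S} ∪
        {S | finrank F S = 4 ∧ P₂ ≤ S ∧ ¬ P₁ ≤ S ∧ (∀ k, finrank F ↥(S ⊓ E k) = 1) ∧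
          S ⊓ E 2 ≤ S ⊓ E 0 ⊔ S ⊓ E 1 ⊔ P₂}) := by
    rintro S ⟨hS, hP₂S, hP₁S, hSE⟩
    rcases h.finrank_inf_eq_two_or_forall_eq_one hS hP₂S hP₁S hSE with ⟨i, hi⟩ | hone
    · exact .inl (mem_biUnion (Finset.mem_coe.mpr (Finset.mem_univ i)) ⟨hS, hP₂S, hP₁S, hSE, hi⟩)
    by_cases hS2 : S ⊓ E 2 ≤ S ⊓ E 0 ⊔ S ⊓ E 1 ⊔ P₂
    · exact .inr (.inr ⟨hS, hP₂S, hP₁S, hone, hS2⟩)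
    refine .inr (.inl ⟨hP₁S, hone, eq_of_le_of_finrank_eq
      (sup_le (sup_le (sup_le inf_le_left inf_le_left) hP₂S) inf_le_left) ?_⟩)
    rw [finrank_sup_of_disjoint (disjoint_of_finrank_eq_one_s15 (hone 2) hS2).symm,
      h.finrank_contact_sup hP₁S (by decide), hone, hone, hone, hS]
  refine (ncard_le_ncard hcover (toFinite _)).trans ((ncard_union_le _ _).trans
    (add_le_add ?_ ((ncard_union_le _ _).trans (add_le_add
      (h.ncard_solids_spanned_by_contacts_le hq) (h.ncard_solids_over_contactPlanes_le hq hV)))))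
  refine (Finset.set_ncard_biUnion_le _ _).trans ?_
  simpa using Finset.sum_le_card_nsmul Finset.univ (fun i => (L i).ncard) _
    fun i _ => h.ncard_solids_meeting_in_line_le hq i

end IsPlaneTriple

theorem stmt15_general {q : ℕ} [Fintype F] [FiniteDimensional F V]
    (hq : Fintype.card F = q) (hV : Module.finrank F V = 7)
    (P₁ P₂ : Submodule F V) (hP₁ : Module.finrank F P₁ = 1)
    (hP₂ : Module.finrank F P₂ = 1)
    (E : Fin 3 → Submodule F V) (hE : ∀ i, Module.finrank F (E i) = 3)
    (hmeet : ∀ i j, i ≠ j → E i ⊓ E j = P₁ ∧ ¬ P₂ ≤ E i ⊔ E j) :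
    {S : Submodule F V | Module.finrank F S = 4 ∧ P₂ ≤ S ∧
        ∀ i, S ⊓ E i ≠ ⊥}.ncard ≤
      3 * q ^ 6 + 6 * q ^ 5 + 7 * q ^ 4 + 4 * q ^ 3 + 2 * q ^ 2 + q + 1 := by
  have : Finite V := Module.finite_of_finite F
  have h : IsPlaneTriple P₁ P₂ E :=
    ⟨hP₁, hP₂, hE, fun i j hij => (hmeet i j hij).1, fun i j hij => (hmeet i j hij).2⟩
  have hsplit : {S : Submodule F V | finrank F S = 4 ∧ P₂ ≤ S ∧ ∀ i, S ⊓ E i ≠ ⊥} ⊆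
      {S | finrank F S = 4 ∧ P₁ ⊔ P₂ ≤ S} ∪
        {S | finrank F S = 4 ∧ P₂ ≤ S ∧ ¬ P₁ ≤ S ∧ ∀ k, S ⊓ E k ≠ ⊥} := by
    rintro S ⟨hS, hP₂S, hSE⟩
    by_cases hP₁S : P₁ ≤ S
    exacts [.inl ⟨hS, sup_le hP₁S hP₂S⟩, .inr ⟨hS, hP₂S, hP₁S, hSE⟩]
  have h2q : 2 * q ≤ q ^ 3 + q ^ 2 := by
    have := hq ▸ Fintype.one_lt_card (α := F)
    nlinarith
  calc _ ≤ _ := (ncard_le_ncard hsplit (toFinite _)).trans (ncard_union_le _ _)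
    _ ≤ _ := add_le_add
        (ncard_solids_through_line_le hq hV (finrank_sup_of_finrank_eq_one hP₁ hP₂ h.P₁_ne_P₂))
        (h.ncard_solids_not_through_P₁_le hq hV)
    _ = _ := by
      zify [h2q]
      ring

theorem stmt15 {q : ℕ} [Fintype F] [FiniteDimensional F V]
    (hq : Fintype.card F = q) (hV : Module.finrank F V = 7)
    (P₁ P₂ : Submodule F V) (hP₁ : Module.finrank F P₁ = 1)
    (hP₂ : Module.finrank F P₂ = 1) (hne : P₁ ≠ P₂)
    (E : Fin 3 → Submodule F V) (hE : ∀ i, Module.finrank F (E i) = 3)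
    (hmeet : ∀ i j, i ≠ j → E i ⊓ E j = P₁ ∧ ¬ P₂ ≤ E i ⊔ E j) :
    {S : Submodule F V | Module.finrank F S = 4 ∧ P₂ ≤ S ∧
        ∀ i, S ⊓ E i ≠ ⊥}.ncard ≤
      3 * q ^ 6 + 6 * q ^ 5 + 7 * q ^ 4 + 4 * q ^ 3 + 2 * q ^ 2 + q + 1 :=
  stmt15_general hq hV P₁ P₂ hP₁ hP₂ E hE hmeet
end

section
/- Let S₁ and S₂ be solids of PG(6,q) with dim(S₁ ∩ S₂) ≤ 2 (in projective terms: S₁ and S₂ meet in at most a line), and let P be a point with P ⊄ S₁ and P ⊄ S₂. Then the number of planes E with P ⊆ E, E ∩ S₁ ≠ 0 and E ∩ S₂ ≠ 0 is at most 2q^6 + 2q^5 + 3q^4 + 2q^3 + 2q^2 + q + 1. -/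
variable {F V : Type*} [Field F] [AddCommGroup V] [Module F V]

/-!
Put `U = (S₁ ⊔ P) ⊓ (S₂ ⊔ P)`. It contains `P`, and has dimension 3 or 4 since `S₁ ⊔ S₂` has
dimension at least 6. A plane `E` through `P` lies in `U`, meets `U` in a line, or meets `U` in `P`:
* `U` contains at most one plane through `P` if `dim U = 3`, and `q² + q + 1` of them if
  `dim U = 4`, as many as the points of the dual of `U / P`;
* planes meeting `U` in a line `ℓ ∋ P` are at most (lines of `U` through `P`) × (planes through
  `ℓ` meeting `U` only in `ℓ`);
* a plane meeting `U` only in `P` and meeting both solids meets each `Sᵢ` in one point off `U` and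
  is spanned by `P` and these two points, so there are at most (points of `S₁` off `U`) ×
  (points of `S₂` off `U`) of them.
For `dim U = 4` the three counts add up to exactly the bound; for `dim U = 3` they stay below it.
-/

open Module Submodule Set

theorem Set.ncard_mul_le_of_pairwiseDisjoint {ι α : Type*} {s : Set ι} {f : ι → Set α}
    {t : Set α} {m : ℕ} (hs : s.Finite) (ht : t.Finite) (hdisj : s.PairwiseDisjoint f)
    (hsub : ∀ i ∈ s, f i ⊆ t) (hm : ∀ i ∈ s, (f i).ncard = m) : s.ncard * m ≤ t.ncard := by
  have hfin : ∀ i ∈ s, (f i).Finite := fun i hi => ht.subset (hsub i hi)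
  calc s.ncard * m = ∑ᶠ i ∈ s, (f i).ncard := by
        rw [finsum_mem_congr rfl hm, finsum_mem_eq_finite_toFinset_sum _ hs, Finset.sum_const,
          smul_eq_mul, ncard_eq_toFinset_card s hs]
    _ = (⋃ i ∈ s, f i).ncard := (hs.ncard_biUnion hfin hdisj).symm
    _ ≤ t.ncard := ncard_le_ncard (iUnion₂_subset hsub) ht

theorem Set.ncard_le_ncard_mul_of_mapsTo {α β : Type*} {s : Set α} {t : Set β} {f : α → β}
    (hf : MapsTo f s t) (hs : s.Finite) (ht : t.Finite) {n : ℕ}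
    (hn : ∀ b ∈ t, {a ∈ s | f a = b}.ncard ≤ n) : s.ncard ≤ t.ncard * n := by
  classical
  rw [ncard_eq_toFinset_card s hs, ncard_eq_toFinset_card t ht, mul_comm]
  refine Finset.card_le_mul_card_image_of_maps_to (f := f) (fun a ha => ?_) n fun b hb => ?_
  · simpa using hf (hs.mem_toFinset.mp ha)
  · rw [← ncard_coe_finset]
    convert hn b (ht.mem_toFinset.mp hb) using 2
    ext a
    simp

namespace Submodule

variable {K V : Type*} [Field K] [AddCommGroup V] [Module K V]

/-- For `L = ⊥` these are the points of `B` off `W`; for `W = L`, all covers of `L` inside `B`. -/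
def coversAvoiding (L B W : Submodule K V) : Set (Submodule K V) :=
  {E | L ≤ E ∧ finrank K E = finrank K L + 1 ∧ E ≤ B ∧ E ⊓ W = L}

theorem inf_sup_eq_sup_inf {P S E : Submodule K V} (hPE : P ≤ E) :
    E ⊓ (S ⊔ P) = P ⊔ E ⊓ S := by
  rw [inf_comm, sup_comm, sup_inf_assoc_of_le S hPE, inf_comm]

section FiniteDimensional

variable [FiniteDimensional K V]

theorem inf_eq_bot_of_finrank_eq_one {P S : Submodule K V} (hP : finrank K P = 1)
    (h : ¬P ≤ S) : P ⊓ S = ⊥ := by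
  have hlt : P ⊓ S < P := inf_le_left.lt_of_ne fun he => h (he ▸ inf_le_right)
  have := finrank_lt_finrank_of_lt hlt
  exact finrank_eq_zero.mp (by omega)

theorem finrank_sup_eq_add_one {P S : Submodule K V} (hP : finrank K P = 1) (h : ¬P ≤ S) :
    finrank K ↥(S ⊔ P) = finrank K S + 1 := by
  have := finrank_sup_add_finrank_inf_eq S P
  rw [inf_comm, inf_eq_bot_of_finrank_eq_one hP h, finrank_bot, hP] at this
  omega

theorem inf_eq_of_finrank_eq_add_one {L E E' : Submodule K V} (hE : L ≤ E) (hE' : L ≤ E')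
    (hfE : finrank K E = finrank K L + 1) (hfE' : finrank K E' = finrank K L + 1)
    (hne : E ≠ E') : E ⊓ E' = L := by
  refine (eq_of_le_of_finrank_le (le_inf hE hE') ?_).symm
  by_contra! hlt
  have h : E ⊓ E' = E := eq_of_le_of_finrank_le inf_le_left (by omega)
  have h' : E ⊓ E' = E' := eq_of_le_of_finrank_le inf_le_right (by omega)
  exact hne (h.symm.trans h')

theorem finrank_inf_sup_of_le {P S E : Submodule K V} (hPE : P ≤ E) (hPS : P ⊓ S = ⊥) :
    finrank K ↥(E ⊓ (S ⊔ P)) = finrank K P + finrank K ↥(E ⊓ S) := by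
  have hbot : P ⊓ (E ⊓ S) = ⊥ := eq_bot_iff.mpr (hPS ▸ inf_le_inf_left P inf_le_right)
  have := finrank_sup_add_finrank_inf_eq P (E ⊓ S)
  rw [hbot, finrank_bot] at this
  rw [inf_sup_eq_sup_inf hPE, ← this, add_zero]

theorem finrank_le_finrank_inf_add_one {P S U : Submodule K V} (hP : finrank K P = 1)
    (hU : U ≤ S ⊔ P) : finrank K U ≤ finrank K ↥(S ⊓ U) + 1 := by
  have h₁ := finrank_sup_add_finrank_inf_eq S U
  have h₂ := finrank_mono (sup_le (le_sup_left : S ≤ S ⊔ P) hU)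
  have h₃ := finrank_add_le_finrank_add_finrank S P
  omega

theorem finrank_sup_inf_sup_bounds {P S₁ S₂ : Submodule K V} (hP : finrank K P = 1)
    (hP₁ : ¬P ≤ S₁) (hP₂ : ¬P ≤ S₂) :
    finrank K S₁ + finrank K S₂ + 2 ≤ finrank K V + finrank K ↥((S₁ ⊔ P) ⊓ (S₂ ⊔ P)) ∧
      finrank K ↥((S₁ ⊔ P) ⊓ (S₂ ⊔ P)) + finrank K ↥(S₁ ⊔ S₂) ≤
        finrank K S₁ + finrank K S₂ + 2 := by
  have h := finrank_sup_add_finrank_inf_eq (S₁ ⊔ P) (S₂ ⊔ P)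
  rw [finrank_sup_eq_add_one hP hP₁, finrank_sup_eq_add_one hP hP₂] at h
  have hV := finrank_le ((S₁ ⊔ P) ⊔ (S₂ ⊔ P))
  have hS := finrank_mono (sup_le_sup (le_sup_left : S₁ ≤ S₁ ⊔ P) (le_sup_left : S₂ ≤ S₂ ⊔ P))
  omega

/-- The subspaces `E ⊓ (Sᵢ ⊔ P) = P ⊔ E ⊓ Sᵢ` of the plane `E` have dimension
`1 + dim (E ⊓ Sᵢ) ≥ 2` and meet only in `P`, so both have dimension 2 and together span `E`. -/
theorem sup_inf_sup_inf_eq {P S₁ S₂ E : Submodule K V} (hP : finrank K P = 1)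
    (hE : finrank K E = 3) (hPE : P ≤ E) (hP₁ : P ⊓ S₁ = ⊥) (hP₂ : P ⊓ S₂ = ⊥)
    (h₁ : E ⊓ S₁ ≠ ⊥) (h₂ : E ⊓ S₂ ≠ ⊥) (hEU : E ⊓ ((S₁ ⊔ P) ⊓ (S₂ ⊔ P)) = P) :
    finrank K ↥(E ⊓ S₁) = 1 ∧ finrank K ↥(E ⊓ S₂) = 1 ∧ (P ⊔ E ⊓ S₁) ⊔ (P ⊔ E ⊓ S₂) = E := by
  have e₁ := finrank_inf_sup_of_le hPE hP₁
  have e₂ := finrank_inf_sup_of_le hPE hP₂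
  have a₁ := Nat.pos_of_ne_zero (mt finrank_eq_zero.mp h₁)
  have a₂ := Nat.pos_of_ne_zero (mt finrank_eq_zero.mp h₂)
  have hsup : E ⊓ (S₁ ⊔ P) ⊔ E ⊓ (S₂ ⊔ P) ≤ E := sup_le inf_le_left inf_le_left
  have hinf : E ⊓ (S₁ ⊔ P) ⊓ (E ⊓ (S₂ ⊔ P)) = P := (inf_inf_distrib_left E _ _).symm.trans hEU
  have h := finrank_sup_add_finrank_inf_eq (E ⊓ (S₁ ⊔ P)) (E ⊓ (S₂ ⊔ P))
  rw [hinf] at h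
  have hle := finrank_mono hsup
  refine ⟨by omega, by omega, ?_⟩
  rw [← inf_sup_eq_sup_inf hPE, ← inf_sup_eq_sup_inf hPE]
  exact eq_of_le_of_finrank_le hsup (by omega)

theorem planes_through_meeting_subset {P S₁ S₂ U : Submodule K V} (hP : finrank K P = 1)
    (hPU : P ≤ U) :
    {E : Submodule K V | finrank K E = 3 ∧ P ≤ E ∧ E ⊓ S₁ ≠ ⊥ ∧ E ⊓ S₂ ≠ ⊥} ⊆
      {E : Submodule K V | finrank K E = 3 ∧ P ≤ E ∧ E ≤ U} ∪
        {E : Submodule K V | finrank K E = finrank K P + 2 ∧ P ≤ E ∧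
          finrank K ↥(E ⊓ U) = finrank K P + 1} ∪
        {E : Submodule K V | (finrank K E = 3 ∧ P ≤ E ∧ E ⊓ S₁ ≠ ⊥ ∧ E ⊓ S₂ ≠ ⊥) ∧
          E ⊓ U = P} := by
  intro E hE
  obtain ⟨hE3, hPE, -, -⟩ := id hE
  have hPEU : P ≤ E ⊓ U := le_inf hPE hPU
  have hlo := finrank_mono hPEU
  have hhi := finrank_mono (inf_le_left : E ⊓ U ≤ E)
  rcases hlo.eq_or_lt with hpt | hpt
  · exact Or.inr ⟨hE, (eq_of_le_of_finrank_le hPEU hpt.ge).symm⟩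
  rcases hhi.eq_or_lt with hEU | hline
  · exact Or.inl (Or.inl ⟨hE3, hPE, inf_eq_left.mp (eq_of_le_of_finrank_le inf_le_left hEU.ge)⟩)
  · exact Or.inl (Or.inr ⟨by omega, hPE, by omega⟩)

end FiniteDimensional

section Counting

variable [Fintype K] [FiniteDimensional K V]

local notation "q" => Fintype.card K

instance : Finite (Submodule K V) :=
  have : Finite V := Module.finite_of_finite K
  Finite.of_injective _ SetLike.coe_injective

theorem ncard_coe_eq_pow (N : Submodule K V) : (N : Set V).ncard = q ^ finrank K N := by
  have : Finite V := Module.finite_of_finite K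
  have : Fintype N := Fintype.ofFinite N
  rw [← Nat.card_coe_set_eq, SetLike.coe_sort_coe, Nat.card_eq_fintype_card,
    card_eq_pow_finrank (K := K)]

theorem ncard_sdiff_add_pow_finrank {L N : Submodule K V} (h : L ≤ N) :
    ((N : Set V) \ L).ncard + q ^ finrank K L = q ^ finrank K N := by
  have : Finite V := Module.finite_of_finite K
  rw [← ncard_coe_eq_pow, ← ncard_coe_eq_pow]
  exact ncard_sdiff_add_ncard_of_subset h

theorem ncard_le_one_of_finrank_eq {P U : Submodule K V} {e : ℕ} (hU : finrank K U = e) :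
    {E : Submodule K V | finrank K E = e ∧ P ≤ E ∧ E ≤ U}.ncard ≤ 1 :=
  (ncard_le_one (toFinite _)).mpr fun _E hE _E' hE' =>
    (eq_of_le_of_finrank_le hE.2.2 (by rw [hE.1, hU])).trans
      (eq_of_le_of_finrank_le hE'.2.2 (by rw [hE'.1, hU])).symm

/-- The sets `E \ L` of the members of `coversAvoiding L B W` are disjoint, of size
`q ^ l * (q - 1)`, and lie in `B \ (B ⊓ W)`. -/
theorem ncard_coversAvoiding_mul_add_le (L B W : Submodule K V) :
    (coversAvoiding L B W).ncard * (q ^ finrank K L * (q - 1)) + q ^ finrank K ↥(B ⊓ W) ≤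
      q ^ finrank K B := by
  have : Finite V := Module.finite_of_finite K
  have hpack : (coversAvoiding L B W).ncard * (q ^ finrank K L * (q - 1)) ≤
      ((B : Set V) \ ↑(B ⊓ W)).ncard := by
    refine ncard_mul_le_of_pairwiseDisjoint (f := fun E : Submodule K V => (E : Set V) \ L)
      (toFinite (coversAvoiding L B W)) (toFinite ((B : Set V) \ ↑(B ⊓ W))) ?_ ?_ ?_
    · rintro E ⟨hLE, hfE, -, -⟩ E' ⟨hLE', hfE', -, -⟩ hne
      refine Set.disjoint_left.mpr fun v hv hv' => hv.2 ?_
      rw [← inf_eq_of_finrank_eq_add_one hLE hLE' hfE hfE' hne]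
      exact ⟨hv.1, hv'.1⟩
    · rintro E ⟨-, -, hEB, hEW⟩ v ⟨hv, hvL⟩
      refine ⟨hEB hv, fun hvW => hvL ?_⟩
      rw [← hEW]
      exact ⟨hv, hvW.2⟩
    · rintro E ⟨hLE, hfE, -, -⟩
      have := ncard_sdiff_add_pow_finrank hLE
      rw [hfE, pow_succ] at this
      rw [Nat.mul_sub_one]
      omega
  have := ncard_sdiff_add_pow_finrank (inf_le_left : B ⊓ W ≤ B)
  omega

theorem ncard_coversAvoiding_le {L B W : Submodule K V} {l b k n : ℕ} (hl : finrank K L = l)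
    (hb : finrank K B = b) (hk : k ≤ finrank K ↥(B ⊓ W))
    (hn : q ^ b ≤ n * (q ^ l * (q - 1)) + q ^ k) : (coversAvoiding L B W).ncard ≤ n := by
  have hq : 1 < q := Fintype.one_lt_card
  have h := ncard_coversAvoiding_mul_add_le L B W
  have hk' : q ^ k ≤ q ^ finrank K ↥(B ⊓ W) := Nat.pow_le_pow_right (by omega) hk
  have hm : 0 < q ^ l * (q - 1) := Nat.mul_pos (Nat.pow_pos (by omega)) (by omega)
  subst hl hb
  exact Nat.le_of_mul_le_mul_right (c := q ^ finrank K L * (q - 1)) (by omega) hm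

/-- Hyperplanes of `U` through `P` are counted as points of the dual: `E ↦ E.dualAnnihilator`
sends them injectively to covers of `U.dualAnnihilator` inside `P.dualAnnihilator`. -/
theorem ncard_hyperplanes_le {P U : Submodule K V} (hPU : P ≤ U) {e n : ℕ}
    (hU : finrank K U = e + 1)
    (hn : q ^ (finrank K V - finrank K P) ≤
      n * (q ^ (finrank K V - finrank K U) * (q - 1)) + q ^ (finrank K V - finrank K U)) :
    {E : Submodule K V | finrank K E = e ∧ P ≤ E ∧ E ≤ U}.ncard ≤ n := by
  have hdual (W : Submodule K V) := Subspace.finrank_add_finrank_dualAnnihilator_eq W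
  calc _ ≤ (coversAvoiding U.dualAnnihilator P.dualAnnihilator U.dualAnnihilator).ncard := by
        refine ncard_le_ncard_of_injOn (fun E => E.dualAnnihilator) ?_
          (fun E _ E' _ h => Subspace.dualAnnihilator_inj.mp h)
        rintro E ⟨hE, hPE, hEU⟩
        have := hdual E
        have := hdual U
        exact ⟨dualAnnihilator_anti hEU, by omega, dualAnnihilator_anti hPE,
          inf_eq_right.mpr (dualAnnihilator_anti hEU)⟩
    _ ≤ n := by
        refine ncard_coversAvoiding_le (by have := hdual U; omega) (by have := hdual P; omega)
          ?_ hn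
        rw [inf_eq_right.mpr (dualAnnihilator_anti hPU)]
        have := hdual U
        omega

theorem ncard_planes_meeting_in_line_le {P U : Submodule K V} (hPU : P ≤ U) {f : ℕ}
    (hf : ∀ L ∈ coversAvoiding P U P, (coversAvoiding L ⊤ U).ncard ≤ f) :
    {E : Submodule K V | finrank K E = finrank K P + 2 ∧ P ≤ E ∧
        finrank K ↥(E ⊓ U) = finrank K P + 1}.ncard ≤
      (coversAvoiding P U P).ncard * f := by
  refine ncard_le_ncard_mul_of_mapsTo (f := (· ⊓ U)) ?_ (toFinite _) (toFinite _)
    fun L hL => (ncard_le_ncard ?_).trans (hf L hL)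
  · rintro E ⟨-, hPE, hEU⟩
    exact ⟨le_inf hPE hPU, hEU, inf_le_right, inf_eq_right.mpr (le_inf hPE hPU)⟩
  · rintro E ⟨⟨hE, -, -⟩, rfl⟩
    exact ⟨inf_le_left, by rw [hE, hL.2.1], le_top, rfl⟩

theorem ncard_planes_meeting_in_point_le {P S₁ S₂ U : Submodule K V} (hP : finrank K P = 1)
    (hP₁ : P ⊓ S₁ = ⊥) (hP₂ : P ⊓ S₂ = ⊥) (hU : U = (S₁ ⊔ P) ⊓ (S₂ ⊔ P)) :
    {E : Submodule K V | (finrank K E = 3 ∧ P ≤ E ∧ E ⊓ S₁ ≠ ⊥ ∧ E ⊓ S₂ ≠ ⊥) ∧ E ⊓ U = P}.ncard ≤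
      (coversAvoiding ⊥ S₁ U).ncard * (coversAvoiding ⊥ S₂ U).ncard := by
  subst hU
  rw [← ncard_prod]
  refine ncard_le_ncard_of_injOn (fun E => (E ⊓ S₁, E ⊓ S₂)) ?_ ?_
  · rintro E ⟨⟨hE, hPE, h₁, h₂⟩, hEU⟩
    obtain ⟨hx₁, hx₂, -⟩ := sup_inf_sup_inf_eq hP hE hPE hP₁ hP₂ h₁ h₂ hEU
    have off (S : Submodule K V) (hPS : P ⊓ S = ⊥) : E ⊓ S ⊓ ((S₁ ⊔ P) ⊓ (S₂ ⊔ P)) = ⊥ := by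
      rw [inf_right_comm, hEU, hPS]
    exact ⟨⟨bot_le, by rw [hx₁, finrank_bot], inf_le_right, off S₁ hP₁⟩,
      ⟨bot_le, by rw [hx₂, finrank_bot], inf_le_right, off S₂ hP₂⟩⟩
  · rintro E ⟨⟨hE, hPE, h₁, h₂⟩, hEU⟩ E' ⟨⟨hE', hPE', h₁', h₂'⟩, hEU'⟩ h
    obtain ⟨-, -, hspan⟩ := sup_inf_sup_inf_eq hP hE hPE hP₁ hP₂ h₁ h₂ hEU
    obtain ⟨-, -, hspan'⟩ := sup_inf_sup_inf_eq hP hE' hPE' hP₁ hP₂ h₁' h₂' hEU'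
    simp only [Prod.mk.injEq] at h
    rw [← hspan, ← hspan', h.1, h.2]

theorem ncard_planes_through_meeting_le {P S₁ S₂ U : Submodule K V} (hP : finrank K P = 1)
    (hP₁ : ¬P ≤ S₁) (hP₂ : ¬P ≤ S₂) (hU : U = (S₁ ⊔ P) ⊓ (S₂ ⊔ P)) {a l f p₁ p₂ : ℕ}
    (ha : {E : Submodule K V | finrank K E = 3 ∧ P ≤ E ∧ E ≤ U}.ncard ≤ a)
    (hl : q ^ finrank K U ≤ l * (q * (q - 1)) + q)
    (hf : q ^ finrank K V ≤ f * (q ^ 2 * (q - 1)) + q ^ finrank K U)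
    (hp₁ : q ^ finrank K S₁ ≤ p₁ * (q - 1) + q ^ (finrank K U - 1))
    (hp₂ : q ^ finrank K S₂ ≤ p₂ * (q - 1) + q ^ (finrank K U - 1)) :
    {E : Submodule K V | finrank K E = 3 ∧ P ≤ E ∧ E ⊓ S₁ ≠ ⊥ ∧ E ⊓ S₂ ≠ ⊥}.ncard ≤
      a + l * f + p₁ * p₂ := by
  have hPU : P ≤ U := hU ▸ le_inf le_sup_right le_sup_right
  have hlines : (coversAvoiding P U P).ncard ≤ l :=
    ncard_coversAvoiding_le hP rfl (by rw [inf_eq_right.mpr hPU, hP]) (by rwa [pow_one])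
  have hfibres (L) (hL : L ∈ coversAvoiding P U P) : (coversAvoiding L ⊤ U).ncard ≤ f :=
    ncard_coversAvoiding_le (hL.2.1.trans (by rw [hP])) (finrank_top K V) (by rw [top_inf_eq]) hf
  have hpoints {S : Submodule K V} {p : ℕ} (hS : U ≤ S ⊔ P)
      (hp : q ^ finrank K S ≤ p * (q - 1) + q ^ (finrank K U - 1)) :
      (coversAvoiding ⊥ S U).ncard ≤ p :=
    ncard_coversAvoiding_le (finrank_bot K V) rfl (k := finrank K U - 1)
      (by have := finrank_le_finrank_inf_add_one hP hS; omega) (by rwa [pow_zero, one_mul])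
  calc _ ≤ _ := ncard_le_ncard (planes_through_meeting_subset (S₁ := S₁) (S₂ := S₂) hP hPU)
    _ ≤ _ := (ncard_union_le _ _).trans (add_le_add (ncard_union_le _ _) le_rfl)
    _ ≤ a + l * f + p₁ * p₂ := by
        gcongr
        · exact (ncard_planes_meeting_in_line_le hPU hfibres).trans (Nat.mul_le_mul_right f hlines)
        · exact (ncard_planes_meeting_in_point_le hP (inf_eq_bot_of_finrank_eq_one hP hP₁)
            (inf_eq_bot_of_finrank_eq_one hP hP₂) hU).trans
            (Nat.mul_le_mul (hpoints (hU ▸ inf_le_left) hp₁) (hpoints (hU ▸ inf_le_right) hp₂))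

end Counting

end Submodule

open Submodule

theorem stmt16 {q : ℕ} [Fintype F] [FiniteDimensional F V]
    (hq : Fintype.card F = q) (hV : Module.finrank F V = 7)
    (S₁ S₂ : Submodule F V) (hS₁ : Module.finrank F S₁ = 4)
    (hS₂ : Module.finrank F S₂ = 4) (hmeet : Module.finrank F ↥(S₁ ⊓ S₂) ≤ 2)
    (P : Submodule F V) (hP : Module.finrank F P = 1)
    (hP₁ : ¬ P ≤ S₁) (hP₂ : ¬ P ≤ S₂) :
    {E : Submodule F V | Module.finrank F E = 3 ∧ P ≤ E ∧
        E ⊓ S₁ ≠ ⊥ ∧ E ⊓ S₂ ≠ ⊥}.ncard ≤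
      2 * q ^ 6 + 2 * q ^ 5 + 3 * q ^ 4 + 2 * q ^ 3 + 2 * q ^ 2 + q + 1 := by
  obtain ⟨r, rfl⟩ : ∃ r, q = r + 1 := Nat.exists_eq_add_one.mpr (hq ▸ Fintype.card_pos)
  obtain ⟨hd₃, hd₄⟩ := finrank_sup_inf_sup_bounds hP hP₁ hP₂
  have hS := finrank_sup_add_finrank_inf_eq S₁ S₂
  set U := (S₁ ⊔ P) ⊓ (S₂ ⊔ P) with hU
  have hPU : P ≤ U := le_inf le_sup_right le_sup_right
  obtain hd | hd : finrank F U = 3 ∨ finrank F U = 3 + 1 := by omega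
  · refine (ncard_planes_through_meeting_le hP hP₁ hP₂ hU (ncard_le_one_of_finrank_eq hd)
      (l := r + 2) (f := (r + 1) ^ 4 + (r + 1) ^ 3 + (r + 1) ^ 2 + (r + 1))
      (p₁ := (r + 1) ^ 3 + (r + 1) ^ 2) (p₂ := (r + 1) ^ 3 + (r + 1) ^ 2) ?_ ?_ ?_ ?_).trans
      (by ring_nf; omega) <;>
    norm_num only [hq, Nat.add_sub_cancel, hd, hV, hS₁, hS₂] <;> ring_nf <;> rfl
  · refine (ncard_planes_through_meeting_le hP hP₁ hP₂ hU
      (ncard_hyperplanes_le (n := (r + 1) ^ 2 + (r + 1) + 1) hPU hd ?_)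
      (l := (r + 1) ^ 2 + (r + 1) + 1) (f := (r + 1) ^ 4 + (r + 1) ^ 3 + (r + 1) ^ 2)
      (p₁ := (r + 1) ^ 3) (p₂ := (r + 1) ^ 3) ?_ ?_ ?_ ?_).trans (le_of_eq (by ring)) <;>
    norm_num only [hq, Nat.add_sub_cancel, hd, hV, hP, hS₁, hS₂] <;> ring_nf <;> rfl
end

section
/- Let C be a maximal independent set of plane-solid flags of PG(6,q). (i) If S is a solid saturated for C, then E' ∩ S ≠ 0 for every flag (E',S') ∈ C. (ii) If S is a solid such that S ∩ E' ≠ 0 for every flag (E',S') ∈ C, then S is saturated for C. (iii) If S and S' are solids saturated for C, then dim(S ∩ S') ≥ 2 (in projective terms: S and S' share at least a line). (iv) If H is a hyperplane such that E ⊆ H for every flag (E,S) ∈ C, then every solid contained in H is saturated for C. -/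
variable {F V : Type*} [Field F] [AddCommGroup V] [Module F V]

/-- A solid S is saturated for C if (E,S) ∈ C for every plane E ⊆ S. -/
def Saturated (C : Set (Submodule F V × Submodule F V)) (S : Submodule F V) : Prop :=
  ∀ E : Submodule F V, Module.finrank F E = 3 → E ≤ S → (E, S) ∈ C

/-!
Parts (ii) and (iv) are maximality: a flag in general position with no member of `C` can be
added to `C`, and inside a hyperplane a solid and a plane always meet. For (i), if `(E', S') ∈ C`
and `E' ∩ S = 0`, then `S + S' ⊇ E' + S` is the whole space, so `S ∩ S'` is at most a point; a
plane `E ⊆ S` avoiding it gives `(E, S) ∈ C` in general position with `(E', S')`. Part (iii)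
follows from (i) applied to a plane of `S'` avoiding `S ∩ S'`.
-/

open Module

namespace Submodule

theorem exists_le_finrank_eq {W : Submodule F V} {n : ℕ}
    (hn : n ≤ finrank F W) : ∃ E ≤ W, finrank F E = n := by
  obtain ⟨v, hv⟩ := exists_linearIndependent_of_le_finrank hn
  refine ⟨(span F (Set.range v)).map W.subtype, map_subtype_le _ _, ?_⟩
  rw [finrank_map_subtype_eq, finrank_span_eq_card hv, Fintype.card_fin]

/-- For a complement `Q` of `W ⊓ P`, the space `W ⊓ Q` meets `P` trivially and has dimension at
least `finrank W - finrank (W ⊓ P)`; take `E` inside it. -/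
theorem exists_le_finrank_eq_inf_eq_bot [FiniteDimensional F V] {W P : Submodule F V} {n : ℕ}
    (hn : n + finrank F ↥(W ⊓ P) ≤ finrank F W) : ∃ E ≤ W, finrank F E = n ∧ E ⊓ P = ⊥ := by
  obtain ⟨Q, hQ⟩ := exists_isCompl (W ⊓ P)
  have hdimQ := finrank_add_eq_of_isCompl hQ
  have hdimWQ := finrank_sup_add_finrank_inf_eq W Q
  have := finrank_le (W ⊔ Q)
  obtain ⟨E, hEWQ, hE⟩ := exists_le_finrank_eq (W := W ⊓ Q) (n := n) (by omega)
  refine ⟨E, hEWQ.trans inf_le_left, hE, eq_bot_iff.2 ?_⟩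
  calc E ⊓ P ≤ W ⊓ Q ⊓ P := inf_le_inf_right P hEWQ
    _ = W ⊓ P ⊓ Q := inf_right_comm W Q P
    _ = ⊥ := hQ.inf_eq_bot

theorem inf_ne_bot_of_finrank_sup_lt [FiniteDimensional F V] {A B : Submodule F V}
    (h : finrank F ↥(A ⊔ B) < finrank F A + finrank F B) : A ⊓ B ≠ ⊥ := by
  intro hAB
  have := finrank_sup_add_finrank_inf_eq A B
  rw [hAB, finrank_bot] at this
  omega

end Submodule

theorem GenPos.symm {f g : Submodule F V × Submodule F V} (h : GenPos f g) : GenPos g f :=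
  And.symm h

/-- `S ⊔ S'` contains `E' ⊔ S`, which already has dimension `3 + 4 = 7`. -/
theorem finrank_inf_le_one_of_plane_inf_eq_bot [FiniteDimensional F V]
    (hV : finrank F V = 7) {E' S S' : Submodule F V} (hE' : finrank F E' = 3)
    (hS : finrank F S = 4) (hS' : finrank F S' = 4) (hE'S' : E' ≤ S') (hE'S : E' ⊓ S = ⊥) :
    finrank F ↥(S ⊓ S') ≤ 1 := by
  have hsup := Submodule.finrank_sup_add_finrank_inf_eq E' S
  rw [hE'S, finrank_bot] at hsup
  have hmono : finrank F ↥(E' ⊔ S) ≤ finrank F ↥(S ⊔ S') :=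
    Submodule.finrank_mono (sup_le (le_sup_of_le_right hE'S') le_sup_left)
  have := Submodule.finrank_sup_add_finrank_inf_eq S S'
  have := Submodule.finrank_le (S ⊔ S')
  omega

namespace IsIndep

variable {C : Set (Submodule F V × Submodule F V)}

theorem inf_ne_bot_of_saturated [FiniteDimensional F V] (hC : IsIndep C)
    (hV : finrank F V = 7) {S : Submodule F V} (hS : finrank F S = 4) (hSat : Saturated C S)
    {f : Submodule F V × Submodule F V} (hf : f ∈ C) : f.1 ⊓ S ≠ ⊥ := by
  intro hfS
  obtain ⟨hE'3, hS'4, hE'S'⟩ := hC.1 f hf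
  have hSS' := finrank_inf_le_one_of_plane_inf_eq_bot hV hE'3 hS hS'4 hE'S' hfS
  obtain ⟨E, hES, hE3, hES'⟩ :=
    Submodule.exists_le_finrank_eq_inf_eq_bot (W := S) (P := f.2) (n := 3) (by omega)
  have hne : (E, S) ≠ f := by
    rintro rfl
    rw [inf_eq_left.2 hE'S', ← Submodule.finrank_eq_zero] at hfS
    omega
  exact hC.2 _ (hSat E hE3 hES) f hf hne ⟨hES', hfS⟩

theorem two_le_finrank_inf_of_saturated [FiniteDimensional F V] (hC : IsIndep C)
    (hV : finrank F V = 7) {S S' : Submodule F V} (hS : finrank F S = 4)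
    (hS' : finrank F S' = 4) (hSat : Saturated C S) (hSat' : Saturated C S') :
    2 ≤ finrank F ↥(S ⊓ S') := by
  by_contra! h
  obtain ⟨E', hE'S', hE'3, hE'S⟩ :=
    Submodule.exists_le_finrank_eq_inf_eq_bot (W := S') (P := S) (n := 3)
      (by rw [inf_comm]; omega)
  exact hC.inf_ne_bot_of_saturated hV hS hSat (hSat' E' hE'3 hE'S') hE'S

end IsIndep

namespace IsMaxIndep

variable {C : Set (Submodule F V × Submodule F V)}

theorem mem_of_forall_not_genPos (hC : IsMaxIndep C) {f : Submodule F V × Submodule F V}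
    (hf : IsFlag f) (h : ∀ g ∈ C, ¬ GenPos f g) : f ∈ C := by
  have hD : IsIndep (insert f C) := by
    refine ⟨fun g hg => hg.elim (· ▸ hf) (hC.1.1 g), ?_⟩
    rintro g (rfl | hg) g' (rfl | hg') hne
    · exact absurd rfl hne
    · exact h g' hg'
    · exact fun hgp => h g hg hgp.symm
    · exact hC.1.2 g hg g' hg' hne
  rw [hC.2 _ hD (Set.subset_insert f C)]
  exact Set.mem_insert f C

theorem saturated_of_forall_inf_ne_bot (hC : IsMaxIndep C) {S : Submodule F V}
    (hS : finrank F S = 4) (h : ∀ f ∈ C, S ⊓ f.1 ≠ ⊥) : Saturated C S :=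
  fun _ hE hES => hC.mem_of_forall_not_genPos ⟨hE, hS, hES⟩
    fun g hg hgp => h g hg (inf_comm S g.1 ▸ hgp.2)

theorem saturated_of_le_hyperplane [FiniteDimensional F V] (hC : IsMaxIndep C)
    {H : Submodule F V} (hH : finrank F H = 6) (hCH : ∀ f ∈ C, f.1 ≤ H) {S : Submodule F V}
    (hS : finrank F S = 4) (hSH : S ≤ H) : Saturated C S := by
  refine hC.saturated_of_forall_inf_ne_bot hS fun f hf => ?_
  apply Submodule.inf_ne_bot_of_finrank_sup_lt
  have := Submodule.finrank_mono (sup_le hSH (hCH f hf))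
  have := (hC.1.1 f hf).1
  omega

end IsMaxIndep

theorem stmt19_general [FiniteDimensional F V]
    (hV : Module.finrank F V = 7)
    (C : Set (Submodule F V × Submodule F V)) (hC : IsMaxIndep C) :
    (∀ S : Submodule F V, Module.finrank F S = 4 → Saturated C S →
      ∀ f ∈ C, f.1 ⊓ S ≠ ⊥) ∧
    (∀ S : Submodule F V, Module.finrank F S = 4 →
      (∀ f ∈ C, S ⊓ f.1 ≠ ⊥) → Saturated C S) ∧
    (∀ S S' : Submodule F V, Module.finrank F S = 4 → Module.finrank F S' = 4 →
      Saturated C S → Saturated C S' → 2 ≤ Module.finrank F ↥(S ⊓ S')) ∧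
    (∀ H : Submodule F V, Module.finrank F H = 6 →
      (∀ f ∈ C, f.1 ≤ H) →
      ∀ S : Submodule F V, Module.finrank F S = 4 → S ≤ H → Saturated C S) :=
  ⟨fun _ hS hSat _ hf => hC.1.inf_ne_bot_of_saturated hV hS hSat hf,
    fun _ hS h => hC.saturated_of_forall_inf_ne_bot hS h,
    fun _ _ hS hS' hSat hSat' => hC.1.two_le_finrank_inf_of_saturated hV hS hS' hSat hSat',
    fun _ hH hCH _ hS hSH => hC.saturated_of_le_hyperplane hH hCH hS hSH⟩

theorem stmt19 {q : ℕ} [Fintype F] [FiniteDimensional F V]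
    (hq : Fintype.card F = q) (hV : Module.finrank F V = 7)
    (C : Set (Submodule F V × Submodule F V)) (hC : IsMaxIndep C) :
    (∀ S : Submodule F V, Module.finrank F S = 4 → Saturated C S →
      ∀ f ∈ C, f.1 ⊓ S ≠ ⊥) ∧
    (∀ S : Submodule F V, Module.finrank F S = 4 →
      (∀ f ∈ C, S ⊓ f.1 ≠ ⊥) → Saturated C S) ∧
    (∀ S S' : Submodule F V, Module.finrank F S = 4 → Module.finrank F S' = 4 →
      Saturated C S → Saturated C S' → 2 ≤ Module.finrank F ↥(S ⊓ S')) ∧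
    (∀ H : Submodule F V, Module.finrank F H = 6 →
      (∀ f ∈ C, f.1 ≤ H) →
      ∀ S : Submodule F V, Module.finrank F S = 4 → S ≤ H → Saturated C S) :=
  stmt19_general hV C hC
end
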